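/- arXiv:2104.09153 — 7 statements merged into one kernel-verified Lean document; each statement's English description precedes it below -/
import Mathlib

section
/- Let c > 0 and γ ∈ (1,2), let ρ* > 0, and define Q(ρ) := (c/(γ−1))(ρ^γ − γ(ρ*)^{γ−1}ρ + (γ−1)(ρ*)^γ) for ρ > 0. Then Q(ρ) ≥ (c/(2(γ−1)))ρ^γ for all ρ ≥ (2γ)^{1/(γ−1)}ρ*, and Q(ρ) ≥ (c/2)(ρ*)^γ for all 0 < ρ < ((γ−1)/(2γ))ρ*. -/
open Real Set

/-- **Ideal-gas lower bounds on `Q` (Remark (ii) after Assumption (H)).**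
For `Q(ρ) = (c/(γ−1))(ρ^γ − γ(ρ*)^{γ−1}ρ + (γ−1)(ρ*)^γ)` with `c > 0`,
`γ ∈ (1,2)` and `ρ* > 0`:
`Q(ρ) ≥ (c/(2(γ−1)))ρ^γ` for `ρ ≥ (2γ)^{1/(γ−1)}ρ*`, and
`Q(ρ) ≥ (c/2)(ρ*)^γ` for `0 < ρ < ((γ−1)/(2γ))ρ*`. -/
theorem ideal_gas_Q_lower_bounds
    (c γ ρs : ℝ) (hc : 0 < c) (hγ : 1 < γ ∧ γ < 2) (hρs : 0 < ρs)
    (Q : ℝ → ℝ)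
    (hQ : ∀ x : ℝ, Q x = c / (γ - 1) *
      (x ^ γ - γ * ρs ^ (γ - 1) * x + (γ - 1) * ρs ^ γ)) :
    (∀ x : ℝ, (2 * γ) ^ (1 / (γ - 1)) * ρs ≤ x →
        c / (2 * (γ - 1)) * x ^ γ ≤ Q x) ∧
    (∀ x : ℝ, 0 < x → x < (γ - 1) / (2 * γ) * ρs →
        c / 2 * ρs ^ γ ≤ Q x) := by
  obtain ⟨hγ1, hγ2⟩ := hγ
  have hγ1' : (0:ℝ) < γ - 1 := by linarith
  have h2γ : (0:ℝ) < 2 * γ := by linarith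
  have hk : (0:ℝ) < c / (γ - 1) := div_pos hc hγ1'
  have hρsγ : (0:ℝ) ≤ ρs ^ γ := Real.rpow_nonneg hρs.le γ
  constructor
  · intro x hx
    have hA : (0:ℝ) < (2 * γ) ^ (1 / (γ - 1)) := Real.rpow_pos_of_pos h2γ _
    have hxpos : 0 < x := lt_of_lt_of_le (mul_pos hA hρs) hx
    -- key: x^(γ-1) ≥ 2γ ρs^(γ-1)
    have hpow : 2 * γ * ρs ^ (γ - 1) ≤ x ^ (γ - 1) := by
      have h1 : ((2 * γ) ^ (1 / (γ - 1)) * ρs) ^ (γ - 1)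
          = 2 * γ * ρs ^ (γ - 1) := by
        rw [Real.mul_rpow (Real.rpow_nonneg h2γ.le _) hρs.le,
          ← Real.rpow_mul h2γ.le]
        congr 1
        rw [one_div_mul_cancel hγ1'.ne', Real.rpow_one]
      calc 2 * γ * ρs ^ (γ - 1) = ((2 * γ) ^ (1 / (γ - 1)) * ρs) ^ (γ - 1) :=
            h1.symm
        _ ≤ x ^ (γ - 1) :=
            Real.rpow_le_rpow (mul_pos hA hρs).le hx hγ1'.le
    have hxg : x ^ (γ - 1) * x = x ^ γ := by
      rw [← Real.rpow_add_one hxpos.ne' (γ - 1)]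
      ring_nf
    have hT : γ * ρs ^ (γ - 1) * x ≤ x ^ γ / 2 := by
      have := mul_le_mul_of_nonneg_right hpow hxpos.le
      nlinarith
    rw [hQ x]
    have hstep : x ^ γ / 2 ≤ x ^ γ - γ * ρs ^ (γ - 1) * x + (γ - 1) * ρs ^ γ := by
      nlinarith [mul_nonneg hγ1'.le hρsγ]
    have := mul_le_mul_of_nonneg_left hstep hk.le
    have hdiv : c / (2 * (γ - 1)) * x ^ γ = c / (γ - 1) * (x ^ γ / 2) := by
      rw [div_mul_eq_mul_div, div_mul_eq_mul_div, div_eq_div_iff (by positivity) hγ1'.ne']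
      ring
    linarith [hdiv ▸ this]
  · intro x hx0 hx
    have hρg : ρs ^ (γ - 1) * ρs = ρs ^ γ := by
      rw [← Real.rpow_add_one hρs.ne' (γ - 1)]
      ring_nf
    have hρsγ1 : (0:ℝ) < ρs ^ (γ - 1) := Real.rpow_pos_of_pos hρs _
    have hxγ : (0:ℝ) ≤ x ^ γ := Real.rpow_nonneg hx0.le γ
    have hT : γ * ρs ^ (γ - 1) * x ≤ (γ - 1) / 2 * ρs ^ γ := by
      have h1 : γ * ρs ^ (γ - 1) * x ≤ γ * ρs ^ (γ - 1) * ((γ - 1) / (2 * γ) * ρs) := by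
        have : (0:ℝ) < γ * ρs ^ (γ - 1) := by positivity
        exact mul_le_mul_of_nonneg_left hx.le this.le
      have h2 : γ * ρs ^ (γ - 1) * ((γ - 1) / (2 * γ) * ρs)
          = (γ - 1) / 2 * (ρs ^ (γ - 1) * ρs) := by
        field_simp
      rw [h2, hρg] at h1
      exact h1
    rw [hQ x]
    have hstep : (γ - 1) / 2 * ρs ^ γ ≤ x ^ γ - γ * ρs ^ (γ - 1) * x + (γ - 1) * ρs ^ γ := by
      nlinarith
    have := mul_le_mul_of_nonneg_left hstep hk.le
    have hdiv : c / 2 * ρs ^ γ = c / (γ - 1) * ((γ - 1) / 2 * ρs ^ γ) := by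
      field_simp
    linarith [hdiv ▸ this]
end

section
/- Let c, A > 0 and γ ∈ (1,2), let ρ* > 0, define Q(ρ) := (c/(γ−1))(ρ^γ − γ(ρ*)^{γ−1}ρ + (γ−1)(ρ*)^γ) and G(ρ) := A∫_{ρ*}^{ρ} l^{(γ−4)/2} √(Q(l)) dl for ρ > 0. Then G(ρ) ≥ A√(c/(2(γ−1))) · (ρ^{γ−1} − ((2γ)^{1/(γ−1)}ρ*)^{γ−1})/(γ−1) for all ρ ≥ (2γ)^{1/(γ−1)}ρ*, and G(ρ) ≤ −(2A/(2−γ))√(c/2)(ρ*)^{γ/2}(ρ^{(γ−2)/2} − (((γ−1)/(2γ))ρ*)^{(γ−2)/2}) for all 0 < ρ < ((γ−1)/(2γ))ρ*. -/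
open Real Set MeasureTheory

/-! For `ρ ≥ (2γ)^{1/(γ-1)} ρ*` the linear term of `Q` is at most half of `ρ^γ`, so
`Q(ρ) ≥ c ρ^γ / (2(γ-1))`; for `ρ ≤ (γ-1)/(2γ) ρ*` it is at most half of the constant term, so
`Q(ρ) ≥ c (ρ*)^γ / 2`. Since the integrand is nonnegative, the part of the integral between `ρ*`
and these thresholds can be dropped, and integrating the resulting power lower bounds gives both
estimates. -/

noncomputable def idealGasQ (c γ ρs x : ℝ) : ℝ :=
  c / (γ - 1) * (x ^ γ - γ * ρs ^ (γ - 1) * x + (γ - 1) * ρs ^ γ)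

lemma sqrt_mul_rpow {k s : ℝ} (γ : ℝ) (hk : 0 ≤ k) (hs : 0 ≤ s) :
    √(k * s ^ γ) = √k * s ^ (γ / 2) := by
  rw [sqrt_mul hk, sqrt_eq_rpow (s ^ γ), ← rpow_mul hs, mul_one_div]

lemma intervalIntegrable_rpow_mul_sqrt {h : ℝ → ℝ} (hh : Continuous h) (p : ℝ) {a b : ℝ}
    (ha : 0 < a) (hb : 0 < b) : IntervalIntegrable (fun l => l ^ p * √(h l)) volume a b := by
  refine ContinuousOn.intervalIntegrable (ContinuousOn.mul (fun t ht => ?_) hh.sqrt.continuousOn)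
  have ht0 : 0 < t := (lt_min ha hb).trans_le ht.1
  exact (continuousAt_rpow_const t p (Or.inl ht0.ne')).continuousWithinAt

lemma integral_le_integral_of_subinterval {f g : ℝ → ℝ} {a b c d : ℝ} (hca : c ≤ a) (hab : a ≤ b)
    (hbd : b ≤ d) (hg : IntervalIntegrable g volume a b) (hf : IntervalIntegrable f volume c d)
    (hf0 : ∀ t ∈ Ioc c d, 0 ≤ f t) (hgf : ∀ t ∈ Icc a b, g t ≤ f t) :
    ∫ t in a..b, g t ≤ ∫ t in c..d, f t :=
  (intervalIntegral.integral_mono_on hab hg (hf.mono_set (uIcc_subset_uIcc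
      (mem_uIcc_of_le hca (hab.trans hbd)) (mem_uIcc_of_le (hca.trans hab) hbd))) hgf).trans
    (intervalIntegral.integral_mono_interval hca hab hbd
      (ae_restrict_of_forall_mem measurableSet_Ioc hf0) hf)

section idealGasQ

variable {c γ ρs : ℝ}

lemma continuous_idealGasQ (hγ : 0 ≤ γ) : Continuous (idealGasQ c γ ρs) := by
  unfold idealGasQ
  have := continuous_rpow_const hγ
  fun_prop

lemma mul_rpow_le_idealGasQ_of_large (hc : 0 ≤ c) (hγ : 1 < γ) (hρs : 0 ≤ ρs) {t : ℝ}
    (ht : 0 < t) (h : 2 * γ * ρs ^ (γ - 1) ≤ t ^ (γ - 1)) :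
    c / (2 * (γ - 1)) * t ^ γ ≤ idealGasQ c γ ρs t := by
  have htγ : t ^ γ = t * t ^ (γ - 1) := by
    rw [← rpow_one_add' ht.le (by linarith), add_sub_cancel]
  have hρsγ : 0 ≤ ρs ^ γ := rpow_nonneg hρs γ
  have hbracket : t ^ γ / 2 ≤ t ^ γ - γ * ρs ^ (γ - 1) * t + (γ - 1) * ρs ^ γ := by
    nlinarith [mul_le_mul_of_nonneg_left h ht.le]
  calc c / (2 * (γ - 1)) * t ^ γ = c / (γ - 1) * (t ^ γ / 2) := by field_simp
    _ ≤ idealGasQ c γ ρs t :=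
      mul_le_mul_of_nonneg_left hbracket (div_nonneg hc (by linarith))

lemma mul_rpow_le_idealGasQ_of_small (hc : 0 ≤ c) (hγ : 1 < γ) (hρs : 0 < ρs) {t : ℝ}
    (ht0 : 0 ≤ t) (ht : t ≤ (γ - 1) / (2 * γ) * ρs) :
    c / 2 * ρs ^ γ ≤ idealGasQ c γ ρs t := by
  have hρsγ : ρs ^ (γ - 1) * ρs = ρs ^ γ := by
    rw [← rpow_add_one hρs.ne', sub_add_cancel]
  have hlinear : γ * ρs ^ (γ - 1) * t ≤ (γ - 1) / 2 * ρs ^ γ :=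
    calc γ * ρs ^ (γ - 1) * t ≤ γ * ρs ^ (γ - 1) * ((γ - 1) / (2 * γ) * ρs) :=
          mul_le_mul_of_nonneg_left ht (by positivity)
      _ = (γ - 1) / 2 * ρs ^ γ := by rw [← hρsγ]; field_simp
  have hbracket : (γ - 1) / 2 * ρs ^ γ ≤ t ^ γ - γ * ρs ^ (γ - 1) * t + (γ - 1) * ρs ^ γ := by
    linarith [rpow_nonneg ht0 γ]
  calc c / 2 * ρs ^ γ = c / (γ - 1) * ((γ - 1) / 2 * ρs ^ γ) := by
        field_simp [(by linarith : γ - 1 ≠ 0)]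
    _ ≤ idealGasQ c γ ρs t :=
      mul_le_mul_of_nonneg_left hbracket (div_nonneg hc (by linarith))

lemma le_integral_rpow_mul_sqrt_idealGasQ_of_large (hc : 0 ≤ c) (hγ : 1 < γ) (hρs : 0 < ρs)
    {x : ℝ} (hx : (2 * γ) ^ (1 / (γ - 1)) * ρs ≤ x) :
    √(c / (2 * (γ - 1))) * ((x ^ (γ - 1) - ((2 * γ) ^ (1 / (γ - 1)) * ρs) ^ (γ - 1)) / (γ - 1))
      ≤ ∫ l in ρs..x, l ^ ((γ - 4) / 2) * √(idealGasQ c γ ρs l) := by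
  set ρ₁ := (2 * γ) ^ (1 / (γ - 1)) * ρs
  set k := c / (2 * (γ - 1))
  have hρ₁ : 0 < ρ₁ := by positivity
  have hρsρ₁ : ρs ≤ ρ₁ :=
    le_mul_of_one_le_left hρs.le (one_le_rpow (by linarith) (one_div_nonneg.mpr (by linarith)))
  have hρ₁pow : ρ₁ ^ (γ - 1) = 2 * γ * ρs ^ (γ - 1) := by
    rw [mul_rpow (by positivity) hρs.le, ← rpow_mul (by linarith), one_div,
      inv_mul_cancel₀ (by linarith), rpow_one]
  have hpointwise : ∀ t ∈ Icc ρ₁ x,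
      √k * t ^ (γ - 2) ≤ t ^ ((γ - 4) / 2) * √(idealGasQ c γ ρs t) := by
    intro t ht
    have ht0 : 0 < t := hρ₁.trans_le ht.1
    have hQ := mul_rpow_le_idealGasQ_of_large hc hγ hρs.le ht0
      (hρ₁pow ▸ rpow_le_rpow hρ₁.le ht.1 (by linarith))
    calc √k * t ^ (γ - 2) = t ^ ((γ - 4) / 2) * √(k * t ^ γ) := by
          rw [sqrt_mul_rpow γ (by positivity) ht0.le, mul_left_comm, ← rpow_add ht0]
          ring_nf
      _ ≤ t ^ ((γ - 4) / 2) * √(idealGasQ c γ ρs t) := by gcongr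
  calc √k * ((x ^ (γ - 1) - ρ₁ ^ (γ - 1)) / (γ - 1)) = ∫ l in ρ₁..x, √k * l ^ (γ - 2) := by
        rw [intervalIntegral.integral_const_mul, integral_rpow (Or.inl (by linarith))]
        ring_nf
    _ ≤ ∫ l in ρs..x, l ^ ((γ - 4) / 2) * √(idealGasQ c γ ρs l) :=
      integral_le_integral_of_subinterval hρsρ₁ hx le_rfl
        ((intervalIntegral.intervalIntegrable_rpow' (by linarith)).const_mul _)
        (intervalIntegrable_rpow_mul_sqrt (continuous_idealGasQ (by linarith)) _ hρs
          (hρ₁.trans_le hx))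
        (fun t ht => mul_nonneg (rpow_nonneg (hρs.trans ht.1).le _) (sqrt_nonneg _)) hpointwise

lemma le_integral_rpow_mul_sqrt_idealGasQ_of_small (hc : 0 ≤ c) (hγ : 1 < γ) (hγ₂ : γ ≠ 2)
    (hρs : 0 < ρs) {x : ℝ} (hx₀ : 0 < x) (hx : x ≤ (γ - 1) / (2 * γ) * ρs) :
    2 / (2 - γ) * (√(c / 2) * ρs ^ (γ / 2)) *
        (x ^ ((γ - 2) / 2) - ((γ - 1) / (2 * γ) * ρs) ^ ((γ - 2) / 2))
      ≤ ∫ l in x..ρs, l ^ ((γ - 4) / 2) * √(idealGasQ c γ ρs l) := by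
  set ρ₀ := (γ - 1) / (2 * γ) * ρs
  set K := √(c / 2) * ρs ^ (γ / 2)
  have hρ₀ : 0 < ρ₀ := by
    have : 0 < γ - 1 := by linarith
    positivity
  have hρ₀ρs : ρ₀ ≤ ρs :=
    mul_le_of_le_one_left hρs.le ((div_le_one (by linarith)).mpr (by linarith))
  have h0 : (0 : ℝ) ∉ uIcc x ρ₀ := notMem_uIcc_of_lt hx₀ hρ₀
  have hpointwise : ∀ t ∈ Icc x ρ₀, K * t ^ ((γ - 4) / 2) ≤
      t ^ ((γ - 4) / 2) * √(idealGasQ c γ ρs t) := by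
    intro t ht
    have ht0 : 0 < t := hx₀.trans_le ht.1
    have hQ := mul_rpow_le_idealGasQ_of_small hc hγ hρs ht0.le ht.2
    calc K * t ^ ((γ - 4) / 2) = t ^ ((γ - 4) / 2) * √(c / 2 * ρs ^ γ) := by
          rw [sqrt_mul_rpow γ (by positivity) hρs.le, mul_comm]
      _ ≤ t ^ ((γ - 4) / 2) * √(idealGasQ c γ ρs t) := by gcongr
  calc 2 / (2 - γ) * K * (x ^ ((γ - 2) / 2) - ρ₀ ^ ((γ - 2) / 2))
        = ∫ l in x..ρ₀, K * l ^ ((γ - 4) / 2) := by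
        have hr : (γ - 4) / 2 ≠ -1 := fun h => hγ₂ (by linarith)
        rw [intervalIntegral.integral_const_mul, integral_rpow (Or.inr ⟨hr, h0⟩),
          show (γ - 4) / 2 + 1 = (γ - 2) / 2 by ring]
        field_simp [sub_ne_zero.mpr hγ₂, sub_ne_zero.mpr hγ₂.symm]
        ring
    _ ≤ ∫ l in x..ρs, l ^ ((γ - 4) / 2) * √(idealGasQ c γ ρs l) :=
      integral_le_integral_of_subinterval le_rfl hx hρ₀ρs
        ((intervalIntegral.intervalIntegrable_rpow (Or.inr h0)).const_mul _)
        (intervalIntegrable_rpow_mul_sqrt (continuous_idealGasQ (by linarith)) _ hx₀ hρs)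
        (fun t ht => mul_nonneg (rpow_nonneg (hx₀.trans ht.1).le _) (sqrt_nonneg _)) hpointwise

end idealGasQ

/-- **Ideal-gas bounds on `G` (Remark (ii) after Assumption (H)).**
For `Q(ρ) = (c/(γ−1))(ρ^γ − γ(ρ*)^{γ−1}ρ + (γ−1)(ρ*)^γ)` and
`G(ρ) = A ∫_{ρ*}^{ρ} l^{(γ−4)/2} √(Q(l)) dl` with `c, A > 0`, `γ ∈ (1,2)`, `ρ* > 0`:
`G(ρ) ≥ A √(c/(2(γ−1))) (ρ^{γ−1} − ((2γ)^{1/(γ−1)}ρ*)^{γ−1})/(γ−1)` for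
`ρ ≥ (2γ)^{1/(γ−1)}ρ*`, and
`G(ρ) ≤ −(2A/(2−γ)) √(c/2) (ρ*)^{γ/2} (ρ^{(γ−2)/2} − (((γ−1)/(2γ))ρ*)^{(γ−2)/2})` for
`0 < ρ < ((γ−1)/(2γ))ρ*`. -/
theorem ideal_gas_G_bounds
    (c A γ ρs : ℝ) (hc : 0 < c) (hA : 0 < A) (hγ : 1 < γ ∧ γ < 2) (hρs : 0 < ρs)
    (Q G : ℝ → ℝ)
    (hQ : ∀ x : ℝ, Q x = c / (γ - 1) *
      (x ^ γ - γ * ρs ^ (γ - 1) * x + (γ - 1) * ρs ^ γ))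
    (hG : ∀ x : ℝ, G x = A * ∫ l in ρs..x, l ^ ((γ - 4) / 2) * Real.sqrt (Q l)) :
    (∀ x : ℝ, (2 * γ) ^ (1 / (γ - 1)) * ρs ≤ x →
        A * Real.sqrt (c / (2 * (γ - 1))) *
          ((x ^ (γ - 1) - ((2 * γ) ^ (1 / (γ - 1)) * ρs) ^ (γ - 1)) / (γ - 1)) ≤ G x) ∧
    (∀ x : ℝ, 0 < x → x < (γ - 1) / (2 * γ) * ρs →
        G x ≤ -(2 * A / (2 - γ)) * Real.sqrt (c / 2) * ρs ^ (γ / 2) *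
          (x ^ ((γ - 2) / 2) - ((γ - 1) / (2 * γ) * ρs) ^ ((γ - 2) / 2))) := by
  obtain ⟨hγ₁, hγ₂⟩ := hγ
  obtain rfl : Q = idealGasQ c γ ρs := funext hQ
  refine ⟨fun x hx => ?_, fun x hx₀ hx => ?_⟩
  · rw [hG, mul_assoc]
    exact mul_le_mul_of_nonneg_left
      (le_integral_rpow_mul_sqrt_idealGasQ_of_large hc.le hγ₁ hρs hx) hA.le
  · have := mul_le_mul_of_nonneg_left
      (le_integral_rpow_mul_sqrt_idealGasQ_of_small hc.le hγ₁ hγ₂.ne hρs hx₀ hx.le) hA.le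
    rw [hG, intervalIntegral.integral_symm]
    linear_combination this
end

section
/- Let c, A > 0 and γ ∈ (1,2), and consider the ideal-gas laws P(ρ) = cρ^γ and μ(ρ) = Aρ^{(γ−1)/2}. Then for every ρ* > 0, Assumption (H) holds: with Q(ρ) := ρ∫_{ρ*}^{ρ} P(τ)τ^{-2} dτ − (P(ρ*)/ρ*)ρ + P(ρ*), k(ρ) := ∫_{ρ*}^{ρ} μ(τ)τ^{-1} dτ and G(ρ) := ∫_{ρ*}^{ρ} μ(l) l^{-3/2} √(Q(l)) dl, one has lim_{ρ→+∞} G(ρ) = +∞, lim_{ρ→0+} G(ρ) = −∞, and lim_{ρ→+∞} k(ρ) = +∞. -/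
open MeasureTheory Set Filter

/-- `Q(ρ) = ρ ∫_{ρ*}^{ρ} P(τ)/τ² dτ − (P(ρ*)/ρ*)ρ + P(ρ*)`. -/
noncomputable def Qf (P : ℝ → ℝ) (ρs x : ℝ) : ℝ :=
  x * (∫ τ in ρs..x, P τ / τ ^ 2) - (P ρs / ρs) * x + P ρs

/-- `k(ρ) = ∫_{ρ*}^{ρ} μ(τ)/τ dτ`. -/
noncomputable def kf (μ : ℝ → ℝ) (ρs x : ℝ) : ℝ :=
  ∫ τ in ρs..x, μ τ / τ

/-- `G(ρ) = ∫_{ρ*}^{ρ} μ(l) l^{-3/2} √(Q(l)) dl`. -/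
noncomputable def Gf (P μ : ℝ → ℝ) (ρs x : ℝ) : ℝ :=
  ∫ l in ρs..x, μ l / l ^ ((3 : ℝ) / 2) * Real.sqrt (Qf P ρs l)

/-- Assumption (H): `G(ρ) → +∞` as `ρ → +∞`, `G(ρ) → −∞` as `ρ → 0⁺`,
and `k(ρ) → +∞` as `ρ → +∞`. -/
def AssumpH (P μ : ℝ → ℝ) (ρs : ℝ) : Prop :=
  Tendsto (Gf P μ ρs) atTop atTop ∧
  Tendsto (Gf P μ ρs) (nhdsWithin 0 (Ioi 0)) atBot ∧
  Tendsto (kf μ ρs) atTop atTop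

/-- Closed form for `Q` in the ideal-gas case. -/
noncomputable def qcf (c γ ρs x : ℝ) : ℝ :=
  c / (γ - 1) * (x ^ γ - γ * ρs ^ (γ - 1) * x + (γ - 1) * ρs ^ γ)

/-- Closed form of the integrand of `G`. -/
noncomputable def gf (c A γ ρs l : ℝ) : ℝ :=
  A * l ^ ((γ - 1) / 2) / l ^ ((3 : ℝ) / 2) * Real.sqrt (qcf c γ ρs l)

lemma Qf_eq (c γ ρs : ℝ) (hγ : 1 < γ) (hρs : 0 < ρs) {x : ℝ} (hx : 0 < x) :
    Qf (fun x => c * x ^ γ) ρs x = qcf c γ ρs x := by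
  have h1 : γ - 1 ≠ 0 := by linarith
  have hint : (∫ τ in ρs..x, (c * τ ^ γ) / τ ^ 2)
      = c * ((x ^ (γ - 1) - ρs ^ (γ - 1)) / (γ - 1)) := by
    rw [show (∫ τ in ρs..x, (c * τ ^ γ) / τ ^ 2) = ∫ τ in ρs..x, c * τ ^ (γ - 2) from ?_,
      intervalIntegral.integral_const_mul, integral_rpow (Or.inl (by linarith)),
      show γ - 2 + 1 = γ - 1 by ring]
    refine intervalIntegral.integral_congr fun τ hτ => ?_
    have hτ0 : 0 < τ := lt_of_lt_of_le (lt_min hρs hx) hτ.1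
    rw [Real.rpow_sub hτ0, Real.rpow_two, mul_div_assoc]
  have hρ2 : ρs ^ γ = ρs ^ (γ - 1) * ρs := by
    rw [← Real.rpow_add_one (ne_of_gt hρs), show γ - 1 + 1 = γ by ring]
  have hx2 : x ^ γ = x ^ (γ - 1) * x := by
    rw [← Real.rpow_add_one (ne_of_gt hx), show γ - 1 + 1 = γ by ring]
  simp only [Qf, qcf]
  rw [hint, hρ2, hx2]
  field_simp
  ring

lemma qcf_nonneg (c γ ρs : ℝ) (hc : 0 < c) (hγ : 1 < γ) (hρs : 0 < ρs) {x : ℝ} (hx : 0 ≤ x) :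
    0 ≤ qcf c γ ρs x := by
  have hb := one_add_mul_self_le_rpow_one_add (s := x / ρs - 1)
    (by have := div_nonneg hx hρs.le; linarith) (le_of_lt hγ)
  rw [add_sub_cancel] at hb
  have hps : (0:ℝ) < ρs ^ γ := Real.rpow_pos_of_pos hρs γ
  have h2 : (1 + γ * (x / ρs - 1)) * ρs ^ γ ≤ x ^ γ := by
    calc (1 + γ * (x / ρs - 1)) * ρs ^ γ ≤ (x / ρs) ^ γ * ρs ^ γ := by
          exact mul_le_mul_of_nonneg_right hb (le_of_lt hps)
      _ = x ^ γ := by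
          rw [Real.div_rpow hx (le_of_lt hρs), div_mul_cancel₀]
          exact ne_of_gt hps
  have hρ2 : ρs ^ γ = ρs ^ (γ - 1) * ρs := by
    rw [← Real.rpow_add_one (ne_of_gt hρs), show γ - 1 + 1 = γ by ring]
  have key : γ * ρs ^ (γ - 1) * x - (γ - 1) * ρs ^ γ ≤ x ^ γ := by
    have : (1 + γ * (x / ρs - 1)) * ρs ^ γ = γ * ρs ^ (γ - 1) * x - (γ - 1) * ρs ^ γ := by
      rw [hρ2]; field_simp; ring
    linarith [h2, this.symm.le]
  have : 0 < c / (γ - 1) := div_pos hc (by linarith)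
  unfold qcf
  nlinarith [key]

lemma rpow_contOn (p : ℝ) : ContinuousOn (fun x : ℝ => x ^ p) (Ioi 0) :=
  fun x hx => (Real.continuousAt_rpow_const x p (Or.inl (ne_of_gt hx))).continuousWithinAt

lemma gf_contOn (c A γ ρs : ℝ) : ContinuousOn (gf c A γ ρs) (Ioi 0) := by
  have hq : ContinuousOn (qcf c γ ρs) (Ioi 0) := by
    apply ContinuousOn.mul continuousOn_const
    exact ((rpow_contOn γ).sub ((continuousOn_const.mul continuousOn_const).mul
      continuousOn_id)).add continuousOn_const
  refine ContinuousOn.mul (ContinuousOn.div (continuousOn_const.mul (rpow_contOn _))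
    (rpow_contOn _) fun x hx => ne_of_gt (Real.rpow_pos_of_pos hx _)) ?_
  exact Real.continuous_sqrt.comp_continuousOn hq

lemma gf_intable (c A γ ρs : ℝ) {a b : ℝ} (ha : 0 < a) (hb : 0 < b) :
    IntervalIntegrable (gf c A γ ρs) volume a b := by
  apply ContinuousOn.intervalIntegrable
  apply (gf_contOn c A γ ρs).mono
  intro x hx
  exact lt_of_lt_of_le (lt_min ha hb) hx.1

lemma sqrt_rpow' {l : ℝ} (hl : 0 ≤ l) (γ : ℝ) : Real.sqrt (l ^ γ) = l ^ (γ / 2) := by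
  rw [Real.sqrt_eq_rpow, ← Real.rpow_mul hl, mul_one_div]

lemma gf_lower {c A γ ρs K : ℝ} (hA : 0 < A) (hK : 0 ≤ K) {l : ℝ} (hl : 0 < l)
    (hq : K * l ^ γ ≤ qcf c γ ρs l) :
    A * Real.sqrt K * l ^ (γ - 2) ≤ gf c A γ ρs l := by
  have h1 : Real.sqrt K * l ^ (γ / 2) ≤ Real.sqrt (qcf c γ ρs l) := by
    rw [← sqrt_rpow' hl.le, ← Real.sqrt_mul hK]
    exact Real.sqrt_le_sqrt hq
  have hpos : 0 ≤ A * l ^ ((γ - 1) / 2) / l ^ ((3 : ℝ) / 2) := by positivity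
  calc A * Real.sqrt K * l ^ (γ - 2)
      = A * l ^ ((γ - 1) / 2) / l ^ ((3 : ℝ) / 2) * (Real.sqrt K * l ^ (γ / 2)) := by
        rw [div_mul_eq_mul_div, eq_div_iff (ne_of_gt (Real.rpow_pos_of_pos hl _))]
        have e : l ^ (γ - 2) * l ^ ((3:ℝ)/2) = l ^ ((γ-1)/2) * l ^ (γ/2) := by
          rw [← Real.rpow_add hl, ← Real.rpow_add hl]; ring_nf
        linear_combination A * Real.sqrt K * e
    _ ≤ gf c A γ ρs l := mul_le_mul_of_nonneg_left h1 hpos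

lemma gf_lower2 {c A γ ρs D : ℝ} (hA : 0 < A) (hD : 0 ≤ D) {l : ℝ} (hl : 0 < l)
    (hq : D ≤ qcf c γ ρs l) :
    A * Real.sqrt D * l ^ ((γ - 4) / 2) ≤ gf c A γ ρs l := by
  have h1 : Real.sqrt D ≤ Real.sqrt (qcf c γ ρs l) := Real.sqrt_le_sqrt hq
  have hpos : 0 ≤ A * l ^ ((γ - 1) / 2) / l ^ ((3 : ℝ) / 2) := by positivity
  calc A * Real.sqrt D * l ^ ((γ - 4) / 2)
      = A * l ^ ((γ - 1) / 2) / l ^ ((3 : ℝ) / 2) * Real.sqrt D := by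
        rw [div_mul_eq_mul_div, eq_div_iff (ne_of_gt (Real.rpow_pos_of_pos hl _))]
        have e : l ^ ((γ - 4) / 2) * l ^ ((3:ℝ)/2) = l ^ ((γ-1)/2) := by
          rw [← Real.rpow_add hl]; ring_nf
        linear_combination A * Real.sqrt D * e
    _ ≤ gf c A γ ρs l := mul_le_mul_of_nonneg_left h1 hpos

/-- **Remark (ii) after Assumption (H).**  For an ideal gas under constant entropy,
with pressure law `P(ρ) = cρ^γ` and viscosity law `μ(ρ) = Aρ^{(γ−1)/2}` where
`c, A > 0` and `γ ∈ (1,2)`, Assumption (H) holds for every `ρ* > 0`. -/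
theorem ideal_gas_satisfies_AssumpH
    (c A γ : ℝ) (hc : 0 < c) (hA : 0 < A) (hγ : 1 < γ ∧ γ < 2)
    (ρs : ℝ) (hρs : 0 < ρs) :
    AssumpH (fun x => c * x ^ γ) (fun x => A * x ^ ((γ - 1) / 2)) ρs := by
  obtain ⟨hγ1, hγ2⟩ := hγ
  set P : ℝ → ℝ := fun x => c * x ^ γ with hP
  set μ : ℝ → ℝ := fun x => A * x ^ ((γ - 1) / 2) with hμ
  -- G agrees with closed-form integral for positive arguments
  have hGeq : ∀ x : ℝ, 0 < x → Gf P μ ρs x = ∫ l in ρs..x, gf c A γ ρs l := by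
    intro x hx
    refine intervalIntegral.integral_congr fun l hl => ?_
    have hl0 : 0 < l := lt_of_lt_of_le (lt_min hρs hx) hl.1
    show μ l / l ^ ((3:ℝ)/2) * Real.sqrt (Qf P ρs l) = gf c A γ ρs l
    rw [Qf_eq c γ ρs hγ1 hρs hl0]; rfl
  constructor
  · -- `G → +∞` at `+∞`
    have hev : ∀ᶠ x : ℝ in atTop, 2 * γ * ρs ^ (γ - 1) ≤ x ^ (γ - 1) :=
      (tendsto_rpow_atTop (by linarith : (0:ℝ) < γ - 1)).eventually_ge_atTop _
    obtain ⟨M, hM⟩ := eventually_atTop.mp (hev.and (eventually_ge_atTop ρs))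
    set M0 : ℝ := max M ρs with hM0
    have hM0ρ : ρs ≤ M0 := le_max_right _ _
    have hM00 : 0 < M0 := lt_of_lt_of_le hρs hM0ρ
    set K : ℝ := c / (2 * (γ - 1)) with hKdef
    have hK0 : 0 < K := div_pos hc (by linarith)
    have hqlb : ∀ l : ℝ, M0 ≤ l → K * l ^ γ ≤ qcf c γ ρs l := by
      intro l hl
      have hl0 : 0 < l := lt_of_lt_of_le hM00 hl
      have h2 : 2 * γ * ρs ^ (γ - 1) ≤ l ^ (γ - 1) :=
        (hM l (le_trans (le_max_left _ _) hl)).1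
      have hlg : l ^ γ = l ^ (γ - 1) * l := by
        rw [← Real.rpow_add_one (ne_of_gt hl0), show γ - 1 + 1 = γ by ring]
      have h3 : γ * ρs ^ (γ - 1) * l ≤ l ^ γ / 2 := by rw [hlg]; nlinarith
      have h4 : 0 ≤ (γ - 1) * ρs ^ γ :=
        mul_nonneg (by linarith) (Real.rpow_pos_of_pos hρs γ).le
      have hcd : (0:ℝ) < c / (γ - 1) := div_pos hc (by linarith)
      calc K * l ^ γ = c / (γ - 1) * (l ^ γ / 2) := by
            rw [hKdef]; field_simp [show (γ:ℝ) - 1 ≠ 0 by linarith]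
        _ ≤ c / (γ - 1) * (l ^ γ - γ * ρs ^ (γ - 1) * l + (γ - 1) * ρs ^ γ) :=
            mul_le_mul_of_nonneg_left (by linarith) hcd.le
        _ = qcf c γ ρs l := rfl
    set C : ℝ := A * Real.sqrt K with hC
    have hC0 : 0 < C := mul_pos hA (Real.sqrt_pos.mpr hK0)
    have key : ∀ b : ℝ, M0 ≤ b →
        (∫ l in ρs..M0, gf c A γ ρs l) + C * ((b ^ (γ-1) - M0 ^ (γ-1)) / (γ-1))
          ≤ ∫ l in ρs..b, gf c A γ ρs l := by
      intro b hb
      have hb0 : 0 < b := lt_of_lt_of_le hM00 hb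
      have hsplit := intervalIntegral.integral_add_adjacent_intervals
        (gf_intable c A γ ρs hρs hM00) (gf_intable c A γ ρs hM00 hb0)
      have hmono : (∫ l in M0..b, C * l ^ (γ - 2)) ≤ ∫ l in M0..b, gf c A γ ρs l := by
        apply intervalIntegral.integral_mono_on hb
        · exact (intervalIntegral.intervalIntegrable_rpow' (by linarith)).const_mul C
        · exact gf_intable c A γ ρs hM00 hb0
        · intro l hl
          exact gf_lower hA hK0.le (lt_of_lt_of_le hM00 hl.1) (hqlb l hl.1)
      rw [intervalIntegral.integral_const_mul, integral_rpow (Or.inl (by linarith)),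
        show γ - 2 + 1 = γ - 1 by ring] at hmono
      linarith
    have hten : Tendsto (fun b : ℝ =>
        (∫ l in ρs..M0, gf c A γ ρs l) + C * ((b ^ (γ-1) - M0 ^ (γ-1)) / (γ-1)))
        atTop atTop := by
      have h1 : Tendsto (fun b : ℝ => C / (γ - 1) * b ^ (γ-1) +
          ((∫ l in ρs..M0, gf c A γ ρs l) - C / (γ - 1) * M0 ^ (γ-1))) atTop atTop :=
        tendsto_atTop_add_const_right _ _
          ((tendsto_rpow_atTop (by linarith : (0:ℝ) < γ - 1)).const_mul_atTop
            (div_pos hC0 (by linarith)))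
      refine h1.congr fun b => by ring
    have hGc : Tendsto (fun b => ∫ l in ρs..b, gf c A γ ρs l) atTop atTop :=
      tendsto_atTop_mono' atTop
        (by filter_upwards [eventually_ge_atTop M0] with b hb using key b hb) hten
    exact hGc.congr' (by filter_upwards [eventually_gt_atTop (0:ℝ)] with x hx
      using (hGeq x hx).symm)
  constructor
  · -- `G → −∞` at `0⁺`
    set x0 : ℝ := (γ - 1) * ρs / (2 * γ) with hx0def
    have hx00 : 0 < x0 := div_pos (mul_pos (by linarith) hρs) (by linarith)
    have hx0ρ : x0 < ρs := by
      rw [hx0def, div_lt_iff₀ (by linarith)]; nlinarith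
    set D : ℝ := c * ρs ^ γ / 2 with hDdef
    have hD0 : 0 < D := by
      have := Real.rpow_pos_of_pos hρs γ; positivity
    have hρ2 : ρs ^ γ = ρs ^ (γ - 1) * ρs := by
      rw [← Real.rpow_add_one (ne_of_gt hρs), show γ - 1 + 1 = γ by ring]
    have hqlb : ∀ l : ℝ, 0 < l → l ≤ x0 → D ≤ qcf c γ ρs l := by
      intro l hl0 hl
      have hlγ : 0 ≤ l ^ γ := (Real.rpow_pos_of_pos hl0 γ).le
      have hcρ : 0 < γ * ρs ^ (γ - 1) := mul_pos (by linarith) (Real.rpow_pos_of_pos hρs _)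
      have h3 : γ * ρs ^ (γ - 1) * l ≤ γ * ρs ^ (γ - 1) * x0 :=
        mul_le_mul_of_nonneg_left hl hcρ.le
      have h4 : γ * ρs ^ (γ - 1) * x0 = (γ - 1) * ρs ^ γ / 2 := by
        rw [hx0def, hρ2]; field_simp
      have hcd : (0:ℝ) < c / (γ - 1) := div_pos hc (by linarith)
      calc D = c / (γ - 1) * ((γ - 1) * ρs ^ γ / 2) := by
            rw [hDdef]; field_simp [show (γ:ℝ) - 1 ≠ 0 by linarith]
        _ ≤ c / (γ - 1) * (l ^ γ - γ * ρs ^ (γ - 1) * l + (γ - 1) * ρs ^ γ) :=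
            mul_le_mul_of_nonneg_left (by linarith) hcd.le
        _ = qcf c γ ρs l := rfl
    set C : ℝ := A * Real.sqrt D with hC
    have hC0 : 0 < C := mul_pos hA (Real.sqrt_pos.mpr hD0)
    set s : ℝ := (γ - 2) / 2 with hsdef
    have hs0 : s < 0 := by rw [hsdef]; linarith
    have key : ∀ x : ℝ, 0 < x → x ≤ x0 →
        (∫ l in ρs..x, gf c A γ ρs l)
          ≤ (∫ l in ρs..x0, gf c A γ ρs l) - C * ((x0 ^ s - x ^ s) / s) := by
      intro x hx hxx0
      have hsplit := intervalIntegral.integral_add_adjacent_intervals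
        (gf_intable c A γ ρs hρs hx) (gf_intable c A γ ρs hx hx00)
      have hne : (0:ℝ) ∉ Set.uIcc x x0 := notMem_uIcc_of_lt hx hx00
      have hmono : (∫ l in x..x0, C * l ^ ((γ - 4)/2)) ≤ ∫ l in x..x0, gf c A γ ρs l := by
        apply intervalIntegral.integral_mono_on hxx0
        · exact (intervalIntegral.intervalIntegrable_rpow (Or.inr hne)).const_mul C
        · exact gf_intable c A γ ρs hx hx00
        · intro l hl
          exact gf_lower2 hA hD0.le (lt_of_lt_of_le hx hl.1) (hqlb l (lt_of_lt_of_le hx hl.1) hl.2)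
      rw [intervalIntegral.integral_const_mul,
        integral_rpow (Or.inr ⟨by intro h; rw [div_eq_iff (two_ne_zero)] at h; linarith, hne⟩),
        show (γ - 4)/2 + 1 = s by rw [hsdef]; ring] at hmono
      linarith
    have hxs : Tendsto (fun x : ℝ => x ^ s) (nhdsWithin 0 (Ioi 0)) atTop := by
      have h1 : Tendsto (fun x : ℝ => (x⁻¹) ^ (-s)) (nhdsWithin 0 (Ioi 0)) atTop :=
        (tendsto_rpow_atTop (by linarith : (0:ℝ) < -s)).comp tendsto_inv_nhdsGT_zero
      refine h1.congr' ?_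
      filter_upwards [eventually_mem_nhdsWithin] with x (hx : x ∈ Ioi 0)
      show (x⁻¹) ^ (-s) = x ^ s
      rw [Real.inv_rpow (le_of_lt hx), ← Real.rpow_neg (le_of_lt hx), neg_neg]
    have hten : Tendsto (fun x : ℝ =>
        (∫ l in ρs..x0, gf c A γ ρs l) - C * ((x0 ^ s - x ^ s) / s))
        (nhdsWithin 0 (Ioi 0)) atBot := by
      have h1 : Tendsto (fun x : ℝ => (C / s) * x ^ s +
          ((∫ l in ρs..x0, gf c A γ ρs l) - C / s * x0 ^ s)) (nhdsWithin 0 (Ioi 0)) atBot :=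
        tendsto_atBot_add_const_right _ _
          (hxs.const_mul_atTop_of_neg (div_neg_of_pos_of_neg hC0 hs0))
      refine h1.congr fun x => by field_simp; ring
    have hGc : Tendsto (fun x => ∫ l in ρs..x, gf c A γ ρs l) (nhdsWithin 0 (Ioi 0)) atBot := by
      apply tendsto_atBot_mono' (nhdsWithin 0 (Ioi 0)) ?_ hten
      filter_upwards [Ioo_mem_nhdsGT_of_mem ⟨le_refl (0:ℝ), hx00⟩] with x hx
      exact key x hx.1 hx.2.le
    refine hGc.congr' ?_
    filter_upwards [eventually_mem_nhdsWithin] with x (hx : x ∈ Ioi 0)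
    exact (hGeq x hx).symm
  · -- `k → +∞` at `+∞`
    set s : ℝ := (γ - 1) / 2 with hsdef
    have hs0 : 0 < s := by rw [hsdef]; linarith
    have hkeq : ∀ᶠ x : ℝ in atTop, kf μ ρs x = A / s * (x ^ s - ρs ^ s) := by
      filter_upwards [eventually_ge_atTop ρs] with x hx
      have hx0 : 0 < x := lt_of_lt_of_le hρs hx
      show (∫ τ in ρs..x, μ τ / τ) = A / s * (x ^ s - ρs ^ s)
      rw [show (∫ τ in ρs..x, μ τ / τ) = ∫ τ in ρs..x, A * τ ^ ((γ - 3)/2) from ?_,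
        intervalIntegral.integral_const_mul, integral_rpow (Or.inl (by linarith)),
        show (γ - 3)/2 + 1 = s by rw [hsdef]; ring]
      · ring
      · refine intervalIntegral.integral_congr fun τ hτ => ?_
        have hτ0 : 0 < τ := lt_of_lt_of_le (lt_min hρs hx0) hτ.1
        show μ τ / τ = A * τ ^ ((γ - 3)/2)
        rw [show (γ - 3)/2 = (γ - 1)/2 - 1 by ring, Real.rpow_sub hτ0, Real.rpow_one, hμ,
          mul_div_assoc]
    have hten : Tendsto (fun x : ℝ => A / s * (x ^ s - ρs ^ s)) atTop atTop := by
      have h1 : Tendsto (fun x : ℝ => A / s * x ^ s + (-(A / s * ρs ^ s))) atTop atTop :=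
        tendsto_atTop_add_const_right _ _
          ((tendsto_rpow_atTop hs0).const_mul_atTop (div_pos hA hs0))
      refine h1.congr fun x => by ring
    exact hten.congr' (hkeq.mono fun x hx => hx.symm)
end

section
/- Let P, μ : (0,∞) → (0,∞) be C² functions with P'(ρ) > 0 for all ρ > 0 and P((0,∞)) = (0,∞), and suppose there exist constants c, A > 0, γ ∈ (1,2) and η ∈ [0,1/2] such that P(ρ) ≥ cρ^γ and μ(ρ) ≥ Aρ^η for all ρ > 0. Then for every ρ* > 0, with Q(ρ) := ρ∫_{ρ*}^{ρ} P(τ)τ^{-2} dτ − (P(ρ*)/ρ*)ρ + P(ρ*), k(ρ) := ∫_{ρ*}^{ρ} μ(τ)τ^{-1} dτ and G(ρ) := ∫_{ρ*}^{ρ} μ(l) l^{-3/2} √(Q(l)) dl, one has lim_{ρ→+∞} G(ρ) = +∞, lim_{ρ→0+} G(ρ) = −∞, and lim_{ρ→+∞} k(ρ) = +∞. -/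
open MeasureTheory Set Filter

lemma aux_intOn {f : ℝ → ℝ} (hf : ContinuousOn f (Ioi 0)) {a b : ℝ}
    (ha : 0 < a) (hb : 0 < b) : IntervalIntegrable f volume a b := by
  apply (hf.mono ?_).intervalIntegrable
  intro x hx
  exact lt_of_lt_of_le (lt_min ha hb) hx.1

lemma aux_contPdiv {P : ℝ → ℝ} (hPc : ContinuousOn P (Ioi 0)) :
    ContinuousOn (fun τ => P τ / τ ^ 2) (Ioi 0) :=
  hPc.div ((continuous_pow 2).continuousOn) (fun x hx => pow_ne_zero 2 (ne_of_gt hx))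

lemma aux_contQf {P : ℝ → ℝ} (hPc : ContinuousOn P (Ioi 0)) {ρs : ℝ} (hρs : 0 < ρs) :
    ContinuousOn (Qf P ρs) (Ioi 0) := by
  have hPd := aux_contPdiv hPc
  intro x hx
  have hI : ContinuousAt (fun u => ∫ τ in ρs..u, P τ / τ ^ 2) x :=
    (intervalIntegral.integral_hasDerivAt_right (aux_intOn hPd hρs hx)
      (hPd.stronglyMeasurableAtFilter isOpen_Ioi x hx)
      (hPd.continuousAt (isOpen_Ioi.mem_nhds hx))).continuousAt
  exact (((continuousAt_id.mul hI).sub (continuousAt_const.mul continuousAt_id)).add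
    continuousAt_const).continuousWithinAt

lemma aux_contGint {P μ : ℝ → ℝ} (hPc : ContinuousOn P (Ioi 0))
    (hμc : ContinuousOn μ (Ioi 0)) {ρs : ℝ} (hρs : 0 < ρs) :
    ContinuousOn (fun l => μ l / l ^ ((3 : ℝ) / 2) * Real.sqrt (Qf P ρs l)) (Ioi 0) := by
  apply ContinuousOn.mul
  · apply hμc.div
    · intro x _
      exact (Real.continuousAt_rpow_const x _ (Or.inl (ne_of_gt ‹x ∈ Ioi 0›))).continuousWithinAt
    · intro x hx
      exact (Real.rpow_pos_of_pos hx _).ne'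
  · exact Real.continuous_sqrt.comp_continuousOn (aux_contQf hPc hρs)

lemma aux_G_atTop {P μ : ℝ → ℝ} (hPc : ContinuousOn P (Ioi 0)) (hμc : ContinuousOn μ (Ioi 0))
    {c A γ η : ℝ} (hc : 0 < c) (hA : 0 < A) (hγ1 : 1 < γ) (hη : 0 ≤ η)
    (hPlb : ∀ x, 0 < x → c * x ^ γ ≤ P x) (hμlb : ∀ x, 0 < x → A * x ^ η ≤ μ x)
    {ρs : ℝ} (hρs : 0 < ρs) (hPρs : 0 < P ρs) :
    Tendsto (Gf P μ ρs) atTop atTop := by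
  have hγ' : (0:ℝ) < γ - 1 := by linarith
  set c1 := c / (γ - 1) with hc1
  have hc1pos : 0 < c1 := div_pos hc hγ'
  set Bc := P ρs / ρs with hBc
  have hBcpos : 0 < Bc := div_pos hPρs hρs
  set C2 := c1 * ρs ^ (γ - 1) + Bc with hC2
  have hC2pos : 0 < C2 := by positivity
  set M0 := (2 * C2 / c1) ^ ((γ - 1)⁻¹) with hM0
  set M := max (max ρs 1) M0 with hM
  have hMρs : ρs ≤ M := le_trans (le_max_left _ _) (le_max_left _ _)
  have hM1 : (1:ℝ) ≤ M := le_trans (le_max_right _ _) (le_max_left _ _)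
  have hMpos : 0 < M := lt_of_lt_of_le one_pos hM1
  -- key lower bound on Q
  have hQM : ∀ l, M ≤ l → c1 / 2 * l ^ γ ≤ Qf P ρs l := by
    intro l hl
    have hlpos : 0 < l := lt_of_lt_of_le hMpos hl
    have hlρs : ρs ≤ l := le_trans hMρs hl
    have hIlow : c * ((l ^ (γ - 1) - ρs ^ (γ - 1)) / (γ - 1)) ≤ ∫ τ in ρs..l, P τ / τ ^ 2 := by
      have e1 : (∫ τ in ρs..l, c * τ ^ (γ - 2)) =
          c * ((l ^ (γ - 1) - ρs ^ (γ - 1)) / (γ - 1)) := by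
        rw [intervalIntegral.integral_const_mul, integral_rpow (Or.inl (by linarith))]
        rw [show γ - 2 + 1 = γ - 1 by ring]
      rw [← e1]
      apply intervalIntegral.integral_mono_on hlρs
      · apply aux_intOn _ hρs hlpos
        exact continuousOn_const.mul (fun x hx =>
          (Real.continuousAt_rpow_const x _ (Or.inl (ne_of_gt hx))).continuousWithinAt)
      · exact aux_intOn (aux_contPdiv hPc) hρs hlpos
      · intro τ hτ
        have hτpos : 0 < τ := lt_of_lt_of_le hρs hτ.1
        have h2 : τ ^ (γ - 2) = τ ^ γ / τ ^ 2 := by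
          rw [Real.rpow_sub hτpos]
          congr 1
          rw [show ((2:ℝ)) = ((2:ℕ):ℝ) by norm_num, Real.rpow_natCast]
        rw [h2, ← mul_div_assoc]
        exact (div_le_div_iff_of_pos_right (by positivity)).mpr (hPlb τ hτpos)
    have hIl : l * (c * ((l ^ (γ - 1) - ρs ^ (γ - 1)) / (γ - 1))) ≤
        l * ∫ τ in ρs..l, P τ / τ ^ 2 := mul_le_mul_of_nonneg_left hIlow hlpos.le
    have hlγ : l ^ γ = l * l ^ (γ - 1) := by
      have h := Real.rpow_add hlpos 1 (γ - 1)
      rw [Real.rpow_one] at h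
      rw [show (1:ℝ) + (γ - 1) = γ by ring] at h
      exact h
    have hM0l : 2 * C2 / c1 ≤ l ^ (γ - 1) := by
      have h1 : M0 ^ (γ - 1) ≤ l ^ (γ - 1) :=
        Real.rpow_le_rpow (by positivity) (le_trans (le_max_right _ _) hl) (by linarith)
      rwa [hM0, Real.rpow_inv_rpow (by positivity) (by linarith : γ - 1 ≠ 0)] at h1
    have e2 : l * (c * ((l ^ (γ - 1) - ρs ^ (γ - 1)) / (γ - 1))) =
        c1 * (l * l ^ (γ - 1)) - c1 * ρs ^ (γ - 1) * l := by
      rw [hc1]; field_simp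
    have h3 : C2 * l ≤ c1 / 2 * l ^ γ := by
      rw [hlγ]
      calc C2 * l = c1 / 2 * (l * (2 * C2 / c1)) := by field_simp
        _ ≤ c1 / 2 * (l * l ^ (γ - 1)) :=
            mul_le_mul_of_nonneg_left (mul_le_mul_of_nonneg_left hM0l hlpos.le) (by positivity)
    have key : c1 / 2 * l ^ γ ≤
        l * (c * ((l ^ (γ - 1) - ρs ^ (γ - 1)) / (γ - 1))) - Bc * l + P ρs := by
      rw [e2, ← hlγ]
      rw [hC2] at h3
      nlinarith [hPρs.le]
    refine le_trans key ?_
    show _ ≤ l * (∫ τ in ρs..l, P τ / τ ^ 2) - P ρs / ρs * l + P ρs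
    rw [← hBc]
    linarith [hIl]
  -- lower bound on the integrand for l ≥ M
  set e := γ / 2 - 3 / 2 with he
  set K := A * Real.sqrt (c1 / 2) with hK
  have hKpos : 0 < K := mul_pos hA (Real.sqrt_pos.mpr (by positivity))
  have hptwise : ∀ l, M ≤ l →
      K * l ^ e ≤ μ l / l ^ ((3:ℝ)/2) * Real.sqrt (Qf P ρs l) := by
    intro l hl
    have hlpos : 0 < l := lt_of_lt_of_le hMpos hl
    have hl1 : (1:ℝ) ≤ l := le_trans hM1 hl
    have h1 : A / l ^ ((3:ℝ)/2) ≤ μ l / l ^ ((3:ℝ)/2) := by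
      apply (div_le_div_iff_of_pos_right (Real.rpow_pos_of_pos hlpos _)).mpr
      refine le_trans ?_ (hμlb l hlpos)
      nlinarith [Real.one_le_rpow hl1 hη]
    have h2 : Real.sqrt (c1 / 2) * l ^ (γ / 2) ≤ Real.sqrt (Qf P ρs l) := by
      have hs : Real.sqrt (c1 / 2 * l ^ γ) = Real.sqrt (c1 / 2) * l ^ (γ / 2) := by
        rw [Real.sqrt_mul (by positivity)]
        congr 1
        rw [Real.sqrt_eq_rpow, ← Real.rpow_mul hlpos.le]
        congr 1
        ring
      rw [← hs]
      exact Real.sqrt_le_sqrt (hQM l hl)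
    have e3 : K * l ^ e = A / l ^ ((3:ℝ)/2) * (Real.sqrt (c1 / 2) * l ^ (γ / 2)) := by
      have h4 : l ^ e = l ^ (γ / 2) / l ^ ((3:ℝ)/2) := by
        rw [he, ← Real.rpow_sub hlpos]
      rw [hK, h4]; ring
    rw [e3]
    apply mul_le_mul h1 h2 (by positivity)
    exact div_nonneg (le_trans (by positivity) (hμlb l hlpos)) (by positivity)
  -- the tail integral lower bound
  have hGint := aux_contGint hPc hμc hρs (P := P) (μ := μ)
  have htail : ∀ ρ, M ≤ ρ →
      K * ((ρ ^ (e + 1) - M ^ (e + 1)) / (e + 1)) ≤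
        ∫ l in M..ρ, μ l / l ^ ((3:ℝ)/2) * Real.sqrt (Qf P ρs l) := by
    intro ρ hρ
    have hρpos : 0 < ρ := lt_of_lt_of_le hMpos hρ
    have e1 : (∫ l in M..ρ, K * l ^ e) = K * ((ρ ^ (e + 1) - M ^ (e + 1)) / (e + 1)) := by
      rw [intervalIntegral.integral_const_mul, integral_rpow (Or.inl (by rw [he]; linarith))]
    rw [← e1]
    apply intervalIntegral.integral_mono_on hρ
    · apply aux_intOn _ hMpos hρpos
      exact continuousOn_const.mul (fun x hx =>
        (Real.continuousAt_rpow_const x _ (Or.inl (ne_of_gt hx))).continuousWithinAt)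
    · exact aux_intOn hGint hMpos hρpos
    · exact fun l hl => hptwise l hl.1
  set C0 := ∫ l in ρs..M, μ l / l ^ ((3:ℝ)/2) * Real.sqrt (Qf P ρs l) with hC0
  have hsplit : ∀ ρ, M ≤ ρ → Gf P μ ρs ρ
      = C0 + ∫ l in M..ρ, μ l / l ^ ((3:ℝ)/2) * Real.sqrt (Qf P ρs l) := by
    intro ρ hρ
    have hρpos : 0 < ρ := lt_of_lt_of_le hMpos hρ
    exact (intervalIntegral.integral_add_adjacent_intervals
      (aux_intOn hGint hρs hMpos) (aux_intOn hGint hMpos hρpos)).symm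
  have key2 : ∀ ρ, M ≤ ρ →
      C0 + K * ((ρ ^ (e + 1) - M ^ (e + 1)) / (e + 1)) ≤ Gf P μ ρs ρ := by
    intro ρ hρ
    rw [hsplit ρ hρ]
    linarith [htail ρ hρ]
  have hep : (0:ℝ) < e + 1 := by rw [he]; linarith
  have hbnd : Tendsto (fun ρ : ℝ =>
      C0 + K * ((ρ ^ (e + 1) - M ^ (e + 1)) / (e + 1))) atTop atTop := by
    apply tendsto_atTop_add_const_left
    apply Tendsto.const_mul_atTop hKpos
    apply Tendsto.atTop_div_const hep
    simpa [sub_eq_add_neg] using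
      tendsto_atTop_add_const_right atTop (-(M ^ (e + 1))) (tendsto_rpow_atTop hep)
  exact tendsto_atTop_mono' atTop ((eventually_ge_atTop M).mono key2) hbnd

lemma aux_zero_notin_uIcc {a b : ℝ} (ha : 0 < a) (hb : 0 < b) : (0:ℝ) ∉ uIcc a b := by
  intro h
  exact absurd (lt_of_lt_of_le (lt_min ha hb) h.1) (lt_irrefl 0)

lemma aux_G_atBot {P μ : ℝ → ℝ} (hPc : ContinuousOn P (Ioi 0)) (hμc : ContinuousOn μ (Ioi 0))
    (hPpos : ∀ x, 0 < x → 0 < P x) (hPmono : MonotoneOn P (Ioi 0))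
    {A η : ℝ} (hA : 0 < A) (hη1 : 0 ≤ η) (hη2 : η ≤ 1 / 2)
    (hμlb : ∀ x, 0 < x → A * x ^ η ≤ μ x)
    {ρs δ : ℝ} (hρs : 0 < ρs) (hδpos : 0 < δ) (hδρs : δ < ρs) (hPδ : P δ ≤ P ρs / 4) :
    Tendsto (Gf P μ ρs) (nhdsWithin 0 (Ioi 0)) atBot := by
  have hPρs : 0 < P ρs := hPpos ρs hρs
  have hPd := aux_contPdiv hPc
  have hGint := aux_contGint hPc hμc hρs (P := P) (μ := μ)
  set Bc := P ρs / ρs with hBc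
  have hBcpos : 0 < Bc := div_pos hPρs hρs
  set C3 := Bc + P ρs / δ with hC3
  have hC3pos : 0 < C3 := by positivity
  set l0 := min δ (min 1 ((P ρs / 4) / C3)) with hl0
  have hl0pos : 0 < l0 := lt_min hδpos (lt_min one_pos (by positivity))
  have hl0δ : l0 ≤ δ := min_le_left _ _
  have hl01 : l0 ≤ 1 := le_trans (min_le_right _ _) (min_le_left _ _)
  have hl0C3 : l0 * C3 ≤ P ρs / 4 := by
    have h : l0 ≤ (P ρs / 4) / C3 :=
      le_trans (min_le_right δ _) (min_le_right 1 _)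
    calc l0 * C3 ≤ (P ρs / 4) / C3 * C3 := mul_le_mul_of_nonneg_right h hC3pos.le
      _ = P ρs / 4 := div_mul_cancel₀ _ hC3pos.ne'
  have hl0ρs : l0 ≤ ρs := le_trans hl0δ hδρs.le
  -- lower bound on Q near 0
  have hQ0 : ∀ l, 0 < l → l ≤ l0 → P ρs / 2 ≤ Qf P ρs l := by
    intro l hlpos hll0
    have hlδ : l ≤ δ := le_trans hll0 hl0δ
    have hb1 : (∫ τ in l..δ, P τ / τ ^ 2) ≤ P δ * (1/l - 1/δ) := by
      have e1 : (∫ τ in l..δ, P δ * τ ^ (-2:ℝ)) = P δ * (1/l - 1/δ) := by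
        rw [intervalIntegral.integral_const_mul,
          integral_rpow (Or.inr ⟨by norm_num, aux_zero_notin_uIcc hlpos hδpos⟩),
          show (-2:ℝ) + 1 = -1 by norm_num, Real.rpow_neg_one, Real.rpow_neg_one]
        ring
      rw [← e1]
      apply intervalIntegral.integral_mono_on hlδ (aux_intOn hPd hlpos hδpos)
      · apply aux_intOn _ hlpos hδpos
        exact continuousOn_const.mul (fun x hx =>
          (Real.continuousAt_rpow_const x _ (Or.inl (ne_of_gt hx))).continuousWithinAt)
      · intro τ hτ
        have hτpos : 0 < τ := lt_of_lt_of_le hlpos hτ.1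
        have hPτ : P τ ≤ P δ := hPmono hτpos hδpos hτ.2
        have e2 : τ ^ (-2:ℝ) = (τ ^ 2)⁻¹ := by
          rw [show (-2:ℝ) = -((2:ℕ):ℝ) by norm_num, Real.rpow_neg hτpos.le, Real.rpow_natCast]
        rw [e2, div_eq_mul_inv]
        exact mul_le_mul_of_nonneg_right hPτ (inv_nonneg.mpr (by positivity))
    have hb2 : (∫ τ in δ..ρs, P τ / τ ^ 2) ≤ P ρs * (1/δ - 1/ρs) := by
      have e1 : (∫ τ in δ..ρs, P ρs * τ ^ (-2:ℝ)) = P ρs * (1/δ - 1/ρs) := by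
        rw [intervalIntegral.integral_const_mul,
          integral_rpow (Or.inr ⟨by norm_num, aux_zero_notin_uIcc hδpos hρs⟩),
          show (-2:ℝ) + 1 = -1 by norm_num, Real.rpow_neg_one, Real.rpow_neg_one]
        ring
      rw [← e1]
      apply intervalIntegral.integral_mono_on hδρs.le (aux_intOn hPd hδpos hρs)
      · apply aux_intOn _ hδpos hρs
        exact continuousOn_const.mul (fun x hx =>
          (Real.continuousAt_rpow_const x _ (Or.inl (ne_of_gt hx))).continuousWithinAt)
      · intro τ hτ
        have hτpos : 0 < τ := lt_of_lt_of_le hδpos hτ.1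
        have hPτ : P τ ≤ P ρs := hPmono hτpos hρs hτ.2
        have e2 : τ ^ (-2:ℝ) = (τ ^ 2)⁻¹ := by
          rw [show (-2:ℝ) = -((2:ℕ):ℝ) by norm_num, Real.rpow_neg hτpos.le, Real.rpow_natCast]
        rw [e2, div_eq_mul_inv]
        exact mul_le_mul_of_nonneg_right hPτ (inv_nonneg.mpr (by positivity))
    have hIdecomp : (∫ τ in ρs..l, P τ / τ ^ 2)
        = -((∫ τ in l..δ, P τ / τ ^ 2) + ∫ τ in δ..ρs, P τ / τ ^ 2) := by
      rw [intervalIntegral.integral_add_adjacent_intervals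
        (aux_intOn hPd hlpos hδpos) (aux_intOn hPd hδpos hρs)]
      exact intervalIntegral.integral_symm l ρs
    have hI : -(P δ * (1/l - 1/δ) + P ρs * (1/δ - 1/ρs)) ≤ ∫ τ in ρs..l, P τ / τ ^ 2 := by
      rw [hIdecomp]
      exact neg_le_neg (add_le_add hb1 hb2)
    have hmul : l * (-(P δ * (1/l - 1/δ) + P ρs * (1/δ - 1/ρs)))
        ≤ l * ∫ τ in ρs..l, P τ / τ ^ 2 := mul_le_mul_of_nonneg_left hI hlpos.le
    have e4 : l * (-(P δ * (1/l - 1/δ) + P ρs * (1/δ - 1/ρs))) - Bc * l + P ρs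
        = P ρs - P δ + (l/δ) * (P δ - P ρs) := by
      rw [hBc]
      field_simp
      ring
    have hfrac1 : 0 ≤ (l/δ) * P δ := by
      have := (hPpos δ hδpos).le
      positivity
    have hfrac2 : (l/δ) * P ρs ≤ P ρs / 4 := by
      have e5 : l / δ * P ρs = l * (P ρs / δ) := by ring
      rw [e5]
      calc l * (P ρs / δ) ≤ l * C3 := by
            apply mul_le_mul_of_nonneg_left _ hlpos.le
            rw [hC3]; linarith
        _ ≤ l0 * C3 := mul_le_mul_of_nonneg_right hll0 hC3pos.le
        _ ≤ P ρs / 4 := hl0C3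
    have h5 : P ρs / 2 ≤ P ρs - P δ + (l/δ) * (P δ - P ρs) := by nlinarith
    show P ρs / 2 ≤ l * (∫ τ in ρs..l, P τ / τ ^ 2) - P ρs / ρs * l + P ρs
    rw [← hBc]
    linarith [hmul, e4 ▸ h5]
  -- pointwise integrand bound near 0
  set K2 := A * Real.sqrt (P ρs / 2) with hK2
  have hK2pos : 0 < K2 := mul_pos hA (Real.sqrt_pos.mpr (by positivity))
  have hpt : ∀ l, 0 < l → l ≤ l0 →
      K2 * (1/l) ≤ μ l / l ^ ((3:ℝ)/2) * Real.sqrt (Qf P ρs l) := by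
    intro l hlpos hll0
    have hl1 : l ≤ 1 := le_trans hll0 hl01
    have h1 : A * (1/l) ≤ μ l / l ^ ((3:ℝ)/2) := by
      have h2 : A * l ^ η / l ^ ((3:ℝ)/2) ≤ μ l / l ^ ((3:ℝ)/2) :=
        (div_le_div_iff_of_pos_right (Real.rpow_pos_of_pos hlpos _)).mpr (hμlb l hlpos)
      refine le_trans ?_ h2
      have e5 : A * l ^ η / l ^ ((3:ℝ)/2) = A * l ^ (η - 3/2) := by
        rw [Real.rpow_sub hlpos]; ring
      rw [e5]
      have h6 : l ^ (-1:ℝ) ≤ l ^ (η - 3/2) :=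
        Real.rpow_le_rpow_of_exponent_ge hlpos hl1 (by linarith)
      rw [Real.rpow_neg_one] at h6
      rw [one_div]
      exact mul_le_mul_of_nonneg_left h6 hA.le
    have h2 : Real.sqrt (P ρs / 2) ≤ Real.sqrt (Qf P ρs l) :=
      Real.sqrt_le_sqrt (hQ0 l hlpos hll0)
    calc K2 * (1/l) = (A * (1/l)) * Real.sqrt (P ρs / 2) := by rw [hK2]; ring
      _ ≤ μ l / l ^ ((3:ℝ)/2) * Real.sqrt (Qf P ρs l) := by
          apply mul_le_mul h1 h2 (Real.sqrt_nonneg _)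
          exact div_nonneg (le_trans (by positivity) (hμlb l hlpos)) (by positivity)
  -- main estimate
  have key : ∀ ρ ∈ Ioo (0:ℝ) l0, Gf P μ ρs ρ ≤ K2 * Real.log ρ - K2 * Real.log l0 := by
    intro ρ hρ
    obtain ⟨hρpos, hρl0⟩ := hρ
    have hdecomp : (∫ l in ρ..ρs, μ l / l ^ ((3:ℝ)/2) * Real.sqrt (Qf P ρs l))
        = (∫ l in ρ..l0, μ l / l ^ ((3:ℝ)/2) * Real.sqrt (Qf P ρs l))
          + ∫ l in l0..ρs, μ l / l ^ ((3:ℝ)/2) * Real.sqrt (Qf P ρs l) :=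
      (intervalIntegral.integral_add_adjacent_intervals
        (aux_intOn hGint hρpos hl0pos) (aux_intOn hGint hl0pos hρs)).symm
    have h1 : K2 * (Real.log l0 - Real.log ρ)
        ≤ ∫ l in ρ..l0, μ l / l ^ ((3:ℝ)/2) * Real.sqrt (Qf P ρs l) := by
      have e6 : (∫ l in ρ..l0, K2 * (1/l)) = K2 * (Real.log l0 - Real.log ρ) := by
        rw [intervalIntegral.integral_const_mul,
          integral_one_div (aux_zero_notin_uIcc hρpos hl0pos),
          Real.log_div hl0pos.ne' hρpos.ne']
      rw [← e6]
      apply intervalIntegral.integral_mono_on hρl0.le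
      · exact aux_intOn (continuousOn_const.mul
          (continuousOn_const.div continuousOn_id (fun x hx => ne_of_gt hx))) hρpos hl0pos
      · exact aux_intOn hGint hρpos hl0pos
      · exact fun l hl => hpt l (lt_of_lt_of_le hρpos hl.1) hl.2
    have h2 : 0 ≤ ∫ l in l0..ρs, μ l / l ^ ((3:ℝ)/2) * Real.sqrt (Qf P ρs l) := by
      apply intervalIntegral.integral_nonneg hl0ρs
      intro l hl
      have hlpos : 0 < l := lt_of_lt_of_le hl0pos hl.1
      exact mul_nonneg (div_nonneg (le_trans (by positivity) (hμlb l hlpos))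
        (by positivity)) (Real.sqrt_nonneg _)
    show (∫ l in ρs..ρ, μ l / l ^ ((3:ℝ)/2) * Real.sqrt (Qf P ρs l)) ≤ _
    rw [intervalIntegral.integral_symm ρ ρs, hdecomp]
    linarith [h1, h2]
  have hbnd : Tendsto (fun ρ : ℝ => K2 * Real.log ρ - K2 * Real.log l0)
      (nhdsWithin 0 (Ioi 0)) atBot := by
    simpa [sub_eq_add_neg] using tendsto_atBot_add_const_right _ (-(K2 * Real.log l0))
      (Real.tendsto_log_nhdsGT_zero.const_mul_atBot hK2pos)
  exact tendsto_atBot_mono' _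
    (eventually_of_mem (Ioo_mem_nhdsGT_of_mem ⟨le_refl (0:ℝ), hl0pos⟩) key) hbnd

lemma aux_k {μ : ℝ → ℝ} (hμc : ContinuousOn μ (Ioi 0)) {A η : ℝ} (hA : 0 < A) (hη : 0 ≤ η)
    (hμlb : ∀ x, 0 < x → A * x ^ η ≤ μ x) {ρs : ℝ} (hρs : 0 < ρs) :
    Tendsto (kf μ ρs) atTop atTop := by
  set B := A * ρs ^ η with hB
  have hBpos : 0 < B := mul_pos hA (Real.rpow_pos_of_pos hρs η)
  have key : ∀ ρ, ρs ≤ ρ → B * (Real.log ρ - Real.log ρs) ≤ kf μ ρs ρ := by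
    intro ρ hρ
    have hρpos : 0 < ρ := lt_of_lt_of_le hρs hρ
    have h0 : (0:ℝ) ∉ uIcc ρs ρ := aux_zero_notin_uIcc hρs hρpos
    have hint : (∫ τ in ρs..ρ, B * (1/τ)) = B * (Real.log ρ - Real.log ρs) := by
      rw [intervalIntegral.integral_const_mul, integral_one_div h0,
        Real.log_div hρpos.ne' hρs.ne']
    rw [← hint]
    apply intervalIntegral.integral_mono_on hρ
    · exact aux_intOn (continuousOn_const.mul
        (continuousOn_const.div continuousOn_id (fun x hx => ne_of_gt hx))) hρs hρpos
    · exact aux_intOn (hμc.div continuousOn_id (fun x hx => ne_of_gt hx)) hρs hρpos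
    · intro τ hτ
      have hτpos : 0 < τ := lt_of_lt_of_le hρs hτ.1
      have h1 : B ≤ μ τ := by
        refine le_trans ?_ (hμlb τ hτpos)
        exact mul_le_mul_of_nonneg_left (Real.rpow_le_rpow hρs.le hτ.1 hη) hA.le
      rw [mul_one_div]
      exact (div_le_div_iff_of_pos_right hτpos).mpr h1
  have hbnd : Tendsto (fun ρ => B * (Real.log ρ - Real.log ρs)) atTop atTop := by
    apply Tendsto.const_mul_atTop hBpos
    simpa [sub_eq_add_neg] using
      tendsto_atTop_add_const_right atTop (-Real.log ρs) Real.tendsto_log_atTop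
  exact tendsto_atTop_mono' atTop ((eventually_ge_atTop ρs).mono key) hbnd

/-- **Remark (iii) after Assumption (H).**  If the `C²` laws `P, μ` (with `P' > 0` and
`P((0,∞)) = (0,∞)`) satisfy the lower bounds `P(ρ) ≥ cρ^γ` and `μ(ρ) ≥ Aρ^η` for all
`ρ > 0`, with `c, A > 0`, `γ ∈ (1,2)` and `η ∈ [0,1/2]`, then the three limits of
Assumption (H) hold for every `ρ* > 0`. -/
theorem lower_bounded_laws_satisfy_AssumpH
    (P μ P' : ℝ → ℝ)
    (hP : ContDiffOn ℝ 2 P (Ioi 0)) (hμ : ContDiffOn ℝ 2 μ (Ioi 0))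
    (hPpos : ∀ x, 0 < x → 0 < P x) (hμpos : ∀ x, 0 < x → 0 < μ x)
    (hP' : ∀ x, 0 < x → HasDerivAt P (P' x) x)
    (hP'pos : ∀ x, 0 < x → 0 < P' x)
    (hPrange : P '' Ioi 0 = Ioi 0)
    (c A γ η : ℝ) (hc : 0 < c) (hA : 0 < A)
    (hγ : 1 < γ ∧ γ < 2) (hη : 0 ≤ η ∧ η ≤ 1 / 2)
    (hPlb : ∀ x, 0 < x → c * x ^ γ ≤ P x)
    (hμlb : ∀ x, 0 < x → A * x ^ η ≤ μ x)
    (ρs : ℝ) (hρs : 0 < ρs) :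
    AssumpH P μ ρs := by
  have hPc : ContinuousOn P (Ioi 0) := hP.continuousOn
  have hμc : ContinuousOn μ (Ioi 0) := hμ.continuousOn
  have hPρs : 0 < P ρs := hPpos ρs hρs
  have hPsm : StrictMonoOn P (Ioi 0) := by
    apply strictMonoOn_of_deriv_pos (convex_Ioi 0) hPc
    intro x hx
    rw [interior_Ioi] at hx
    rw [(hP' x hx).deriv]
    exact hP'pos x hx
  obtain ⟨δ, hδmem, hPδ⟩ : ∃ δ ∈ Ioi (0:ℝ), P δ = P ρs / 4 := by
    have hmem : P ρs / 4 ∈ Ioi (0:ℝ) := by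
      simp only [mem_Ioi]; positivity
    rw [← hPrange] at hmem
    obtain ⟨δ, hδ, hδ'⟩ := hmem
    exact ⟨δ, hδ, hδ'⟩
  have hδpos : 0 < δ := hδmem
  have hδρs : δ < ρs := by
    by_contra h
    push_neg at h
    have := hPsm.monotoneOn hρs hδpos h
    rw [hPδ] at this
    linarith
  refine ⟨?_, ?_, ?_⟩
  · exact aux_G_atTop hPc hμc hc hA hγ.1 hη.1 hPlb hμlb hρs hPρs
  · exact aux_G_atBot hPc hμc hPpos hPsm.monotoneOn hA hη.1 hη.2 hμlb hρs hδpos hδρs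
      (le_of_eq hPδ)
  · exact aux_k hμc hA hη.1 hμlb hρs
end

section
/- Let c, A > 0 and γ ∈ (1,2), let ρ* > 0, let P(ρ) := cρ^γ, and let k(ρ) := (2A/(γ−1))(ρ^{(γ−1)/2} − (ρ*)^{(γ−1)/2}) for ρ > 0. Then for every constant K > 0 satisfying K·c·(γ−1)·(ρ*)^{(γ+1)/2} > 2A, the inequality |k(ρ)| ≤ K|P(ρ) − P(ρ*)| holds for all ρ > 0. -/
open Real Set

/-!
Writing `x = ρ* t`, the claim reduces to `|t ^ α - 1| ≤ |t ^ γ - 1|` for `α = (γ - 1) / 2 ≤ γ`: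
for fixed `t > 0`, `s ↦ t ^ s` moves monotonically away from `1` on `s ≥ 0`.
The condition on `K` is exactly what absorbs the factor `(ρ*) ^ (α - γ)` this rescaling produces.
-/

theorem abs_rpow_sub_one_le_abs_rpow_sub_one {t α β : ℝ} (ht : 0 < t) (hα : 0 ≤ α)
    (hαβ : α ≤ β) : |t ^ α - 1| ≤ |t ^ β - 1| := by
  rcases le_or_gt 1 t with h1 | h1
  · have hle : t ^ α ≤ t ^ β := rpow_le_rpow_of_exponent_le h1 hαβ
    have hone : 1 ≤ t ^ α := one_le_rpow h1 hα
    rw [abs_of_nonneg (by linarith), abs_of_nonneg (by linarith)]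
    linarith
  · have hle : t ^ β ≤ t ^ α := rpow_le_rpow_of_exponent_ge ht h1.le hαβ
    have hone : t ^ α ≤ 1 := rpow_le_one ht.le h1.le hα
    rw [abs_of_nonpos (by linarith), abs_of_nonpos (by linarith)]
    linarith

theorem abs_rpow_sub_rpow_le {x r α β : ℝ} (hx : 0 < x) (hr : 0 < r) (hα : 0 ≤ α)
    (hαβ : α ≤ β) : |x ^ α - r ^ α| ≤ r ^ (α - β) * |x ^ β - r ^ β| := by
  obtain ⟨t, ht, rfl⟩ : ∃ t, 0 < t ∧ x = r * t := ⟨x / r, div_pos hx hr, by field_simp⟩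
  have factor : ∀ s : ℝ, |(r * t) ^ s - r ^ s| = r ^ s * |t ^ s - 1| := fun s => by
    rw [mul_rpow hr.le ht.le, ← mul_sub_one, abs_mul, abs_of_pos (rpow_pos_of_pos hr s)]
  calc |(r * t) ^ α - r ^ α| = r ^ α * |t ^ α - 1| := factor α
    _ ≤ r ^ α * |t ^ β - 1| :=
      mul_le_mul_of_nonneg_left (abs_rpow_sub_one_le_abs_rpow_sub_one ht hα hαβ) (by positivity)
    _ = r ^ (α - β) * |(r * t) ^ β - r ^ β| := by
      rw [factor β, ← mul_assoc, ← rpow_add hr, sub_add_cancel]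

theorem ideal_gas_satisfies_AssumpA_general
    (c A γ ρs : ℝ) (hc : 0 < c) (hA : 0 < A) (hγ : 1 < γ ∧ γ < 2) (hρs : 0 < ρs)
    (P k : ℝ → ℝ)
    (hP : ∀ x : ℝ, P x = c * x ^ γ)
    (hk : ∀ x : ℝ, k x = 2 * A / (γ - 1) * (x ^ ((γ - 1) / 2) - ρs ^ ((γ - 1) / 2)))
    (K : ℝ) (hKbig : 2 * A < K * c * (γ - 1) * ρs ^ ((γ + 1) / 2)) :
    ∀ x, 0 < x → |k x| ≤ K * |P x - P ρs| := by
  obtain ⟨hγ1, -⟩ := hγ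
  intro x hx
  have hcoef : 2 * A / (γ - 1) * ρs ^ ((γ - 1) / 2 - γ) ≤ K * c := by
    rw [show (γ - 1) / 2 - γ = -((γ + 1) / 2) by ring, rpow_neg hρs.le, ← div_eq_mul_inv,
      div_div, div_le_iff₀ (by positivity)]
    linarith
  rw [hk, hP, hP, ← mul_sub, abs_mul, abs_mul, abs_of_pos hc,
    abs_of_pos (by positivity : 0 < 2 * A / (γ - 1)), ← mul_assoc]
  calc 2 * A / (γ - 1) * |x ^ ((γ - 1) / 2) - ρs ^ ((γ - 1) / 2)|
      ≤ 2 * A / (γ - 1) * (ρs ^ ((γ - 1) / 2 - γ) * |x ^ γ - ρs ^ γ|) := by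
        gcongr
        exact abs_rpow_sub_rpow_le hx hρs (by linarith) (by linarith)
    _ ≤ K * c * |x ^ γ - ρs ^ γ| := by
        rw [← mul_assoc]
        gcongr

/-- **Validity of Assumption (A) for the ideal gas.**  With `P(ρ) = cρ^γ` and
`k(ρ) = (2A/(γ−1))(ρ^{(γ−1)/2} − (ρ*)^{(γ−1)/2})` (`c, A > 0`, `γ ∈ (1,2)`,
`ρ* > 0`), every `K > 0` with `K c (γ−1) (ρ*)^{(γ+1)/2} > 2A` satisfies
`|k(ρ)| ≤ K|P(ρ) − P(ρ*)|` for all `ρ > 0`. -/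
theorem ideal_gas_satisfies_AssumpA
    (c A γ ρs : ℝ) (hc : 0 < c) (hA : 0 < A) (hγ : 1 < γ ∧ γ < 2) (hρs : 0 < ρs)
    (P k : ℝ → ℝ)
    (hP : ∀ x : ℝ, P x = c * x ^ γ)
    (hk : ∀ x : ℝ, k x = 2 * A / (γ - 1) * (x ^ ((γ - 1) / 2) - ρs ^ ((γ - 1) / 2)))
    (K : ℝ) (hK : 0 < K) (hKbig : 2 * A < K * c * (γ - 1) * ρs ^ ((γ + 1) / 2)) :
    ∀ x, 0 < x → |k x| ≤ K * |P x - P ρs| :=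
  ideal_gas_satisfies_AssumpA_general c A γ ρs hc hA hγ hρs P k hP hk K hKbig
end

section
/- Fix r > 0 and S ≥ 0. For every a, b ∈ ℝ with a < b, every positive continuous function ρ on [a,b] belonging to H¹(a,b), and every continuous function v on [a,b] with ∫_a^b ρ(x)dx = 1 and V(a,b,ρ,v) ≤ S, the following two estimates hold: (i) |G(ρ(x)) − G(ρ(y))| ≤ (2/√r)·S for all x, y ∈ [a,b]; (ii) k²(ρ(a)) ≤ 4(1 + r^{-1})S. -/
open MeasureTheory Set Filter

/-- Potential energy `U(a,b,ρ) = ∫_a^b Q(ρ(x)) dx`. -/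
noncomputable def Uf (P : ℝ → ℝ) (ρs a b : ℝ) (ρ : ℝ → ℝ) : ℝ :=
  ∫ x in a..b, Qf P ρs (ρ x)

/-- Total mechanical energy `E`. -/
noncomputable def Ef (P : ℝ → ℝ) (ρs a b : ℝ) (ρ v : ℝ → ℝ) : ℝ :=
  (v a) ^ 2 / 2 + (v b) ^ 2 / 2 + (1 / 2) * (∫ x in a..b, ρ x * (v x) ^ 2)
    + Uf P ρs a b ρ

/-- Transformed energy `W`. -/
noncomputable def Wf (P μ : ℝ → ℝ) (ρs a b : ℝ) (ρ ρx v : ℝ → ℝ) : ℝ :=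
  (1 / 2) * (∫ x in a..b, (ρ x)⁻¹ * (ρ x * v x + μ (ρ x) * (ρ x)⁻¹ * ρx x) ^ 2)
    + (1 / 2) * (v b - kf μ ρs (ρ b)) ^ 2
    + (1 / 2) * (v a + kf μ ρs (ρ a)) ^ 2
    + Uf P ρs a b ρ

/-- Control Lyapunov functional `V = W + r E`. -/
noncomputable def Vf (P μ : ℝ → ℝ) (ρs r a b : ℝ) (ρ ρx v : ℝ → ℝ) : ℝ :=
  Wf P μ ρs a b ρ ρx v + r * Ef P ρs a b ρ v

/-- `f ∈ H¹(a,b)` with weak derivative `f'`:  `f' ∈ L¹ ∩ L²(a,b)` and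
`f(x) = f(a) + ∫_a^x f'(s) ds` on `[a,b]`. -/
def H1On (a b : ℝ) (f f' : ℝ → ℝ) : Prop :=
  IntervalIntegrable f' volume a b ∧
  IntervalIntegrable (fun s => (f' s) ^ 2) volume a b ∧
  ∀ x ∈ Icc a b, f x = f a + ∫ s in a..x, f' s

/-!
Since `ρ` is absolutely continuous and `G' = μ l^{-3/2} √Q`, the chain rule gives
`G(ρ(x)) - G(ρ(y)) = ∫_y^x (μ(ρ) ρ^{-3/2} ρ_x) √Q(ρ)`, so by Cauchy–Schwarz its square is at most
`∫ μ(ρ)² ρ^{-3} ρ_x² · ∫ Q(ρ)`. Writing `μ ρ^{-3/2} ρ_x = ρ^{-1/2}(ρv + μ ρ^{-1} ρ_x) - ρ^{1/2} v`,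
the first factor is at most twice the integral term of `W` plus twice the kinetic term of `E`,
hence `≤ 4(1 + r⁻¹)S`, while `V ≥ (1 + r)U` bounds the second by `S / (1 + r)`; the product is
`4S²/r`. Likewise `k(ρ(a)) = (v(a) + k(ρ(a))) - v(a)` with both terms controlled by `V`.
-/

theorem LipschitzOnWith.comp_absolutelyContinuousOnInterval {X Y : Type*}
    [PseudoMetricSpace X] [PseudoMetricSpace Y] {F : X → Y} {f : ℝ → X} {K : NNReal}
    {t : Set X} {a b : ℝ} (hF : LipschitzOnWith K F t)
    (hf : AbsolutelyContinuousOnInterval f a b) (hft : MapsTo f (uIcc a b) t) :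
    AbsolutelyContinuousOnInterval (F ∘ f) a b := by
  have hKf := Tendsto.const_mul (K : ℝ) hf
  rw [mul_zero] at hKf
  refine squeeze_zero' (Eventually.of_forall fun _ ↦ Finset.sum_nonneg fun _ _ ↦ dist_nonneg)
    ?_ hKf
  filter_upwards [eventually_inf_principal.2 (Eventually.of_forall fun _ ↦ id)] with E hE
  rw [Finset.mul_sum]
  exact Finset.sum_le_sum fun i hi ↦
    hF.dist_le_mul _ (hft (hE.1 i hi).1) _ (hft (hE.1 i hi).2)

theorem LocallyLipschitzOn.comp_absolutelyContinuousOnInterval {E Y : Type*}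
    [SeminormedAddCommGroup E] [PseudoMetricSpace Y] {F : E → Y} {f : ℝ → E} {t : Set E}
    {a b : ℝ} (hF : LocallyLipschitzOn t F)
    (hf : AbsolutelyContinuousOnInterval f a b) (hft : MapsTo f (uIcc a b) t) :
    AbsolutelyContinuousOnInterval (F ∘ f) a b := by
  obtain ⟨K, hK⟩ := (hF.mono (mapsTo_iff_image_subset.1 hft)).exists_lipschitzOnWith_of_compact
    (isCompact_uIcc.image_of_continuousOn hf.continuousOn)
  exact hK.comp_absolutelyContinuousOnInterval hf (mapsTo_image f _)

theorem integral_comp_primitive_mul_eq_sub {F g u : ℝ → ℝ} {t : Set ℝ} {a b c : ℝ}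
    (hF : LocallyLipschitzOn t F) (hFg : ∀ y ∈ t, HasDerivAt F (g y) y)
    (hu : IntervalIntegrable u volume a b)
    (hmaps : MapsTo (fun x ↦ c + ∫ s in a..x, u s) (uIcc a b) t) :
    ∫ x in a..b, g (c + ∫ s in a..x, u s) * u x = F (c + ∫ s in a..b, u s) - F c := by
  set w : ℝ → ℝ := fun x ↦ c + ∫ s in a..x, u s
  have hw : AbsolutelyContinuousOnInterval w a b :=
    (LipschitzWith.const c).lipschitzOnWith.absolutelyContinuousOnInterval.add
      (hu.absolutelyContinuousOnInterval_intervalIntegral left_mem_uIcc)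
  have hderiv : ∀ᵐ x, x ∈ uIoc a b → g (w x) * u x = deriv (F ∘ w) x := by
    filter_upwards [hu.ae_hasDerivAt_integral] with x hx hxab
    replace hxab := uIoc_subset_uIcc hxab
    exact (((hFg _ (hmaps hxab)).comp x ((hx hxab a left_mem_uIcc).const_add c)).deriv).symm
  rw [intervalIntegral.integral_congr_ae hderiv,
    (hF.comp_absolutelyContinuousOnInterval hw hmaps).integral_deriv_eq_sub]
  simp [w]

theorem ContinuousOn.hasDerivAt_integral_of_isOpen {g : ℝ → ℝ} {t : Set ℝ} {c y : ℝ}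
    (ht : IsOpen t) (ht' : t.OrdConnected) (hg : ContinuousOn g t) (hc : c ∈ t) (hy : y ∈ t) :
    HasDerivAt (fun z ↦ ∫ l in c..z, g l) (g y) y :=
  intervalIntegral.integral_hasDerivAt_right
    (hg.mono (ht'.uIcc_subset hc hy)).intervalIntegrable (hg.stronglyMeasurableAtFilter ht y hy)
    (hg.continuousAt (ht.mem_nhds hy))

theorem ContinuousOn.locallyLipschitzOn_integral {g : ℝ → ℝ} {t : Set ℝ} {c : ℝ}
    (ht : IsOpen t) (ht' : t.OrdConnected) (hg : ContinuousOn g t) (hc : c ∈ t) :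
    LocallyLipschitzOn t (fun z ↦ ∫ l in c..z, g l) := by
  have hderiv := fun y (hy : y ∈ t) ↦ hg.hasDerivAt_integral_of_isOpen ht ht' hc hy
  refine ContDiffOn.locallyLipschitzOn ht'.convex ?_
  rw [show (1 : WithTop ℕ∞) = 0 + 1 from rfl, contDiffOn_succ_iff_deriv_of_isOpen ht]
  refine ⟨fun y hy ↦ (hderiv y hy).differentiableAt.differentiableWithinAt, by simp,
    contDiffOn_zero.2 (hg.congr fun y hy ↦ (hderiv y hy).deriv)⟩

theorem integral_comp_primitive_mul {g u : ℝ → ℝ} {t : Set ℝ} {a b c : ℝ}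
    (ht : IsOpen t) (ht' : t.OrdConnected) (hg : ContinuousOn g t)
    (hu : IntervalIntegrable u volume a b)
    (hmaps : MapsTo (fun x ↦ c + ∫ s in a..x, u s) (uIcc a b) t) :
    ∫ x in a..b, g (c + ∫ s in a..x, u s) * u x
      = ∫ y in c..(c + ∫ s in a..b, u s), g y := by
  have hc : c ∈ t := by simpa using hmaps (left_mem_uIcc (b := b))
  rw [integral_comp_primitive_mul_eq_sub (hg.locallyLipschitzOn_integral ht ht' hc)
    (fun y hy ↦ hg.hasDerivAt_integral_of_isOpen ht ht' hc hy) hu hmaps]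
  simp

theorem sq_intervalIntegral_mul_le {f g : ℝ → ℝ} {a b : ℝ} (hab : a ≤ b)
    (hfg : IntervalIntegrable (fun x ↦ f x * g x) volume a b)
    (hf : IntervalIntegrable (fun x ↦ f x ^ 2) volume a b)
    (hg : IntervalIntegrable (fun x ↦ g x ^ 2) volume a b) :
    (∫ x in a..b, f x * g x) ^ 2 ≤ (∫ x in a..b, f x ^ 2) * ∫ x in a..b, g x ^ 2 := by
  have hquad : ∀ t : ℝ, 0 ≤ (∫ x in a..b, f x ^ 2) * (t * t)
      + 2 * (∫ x in a..b, f x * g x) * t + ∫ x in a..b, g x ^ 2 := fun t ↦ by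
    have hexpand : (∫ x in a..b, (t * f x + g x) ^ 2)
        = ∫ x in a..b, (t * t * f x ^ 2 + (2 * t * (f x * g x) + g x ^ 2)) :=
      intervalIntegral.integral_congr fun x _ ↦ by ring
    have hnonneg := intervalIntegral.integral_nonneg (μ := volume) hab
      fun x _ ↦ sq_nonneg (t * f x + g x)
    rw [hexpand, intervalIntegral.integral_add (hf.const_mul _) ((hfg.const_mul _).add hg),
      intervalIntegral.integral_add (hfg.const_mul _) hg, intervalIntegral.integral_const_mul,
      intervalIntegral.integral_const_mul] at hnonneg
    linarith
  have := discrim_le_zero hquad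
  rw [discrim] at this
  linarith

theorem abs_intervalIntegral_le_integral_abs_of_mem_Icc {f : ℝ → ℝ} {a b x y : ℝ}
    (hf : IntervalIntegrable f volume a b) (hx : x ∈ Icc a b) (hy : y ∈ Icc a b) :
    |∫ s in x..y, f s| ≤ ∫ s in a..b, |f s| := by
  wlog hxy : x ≤ y generalizing x y
  · rw [intervalIntegral.integral_symm, abs_neg]
    exact this hy hx (le_of_not_ge hxy)
  exact (intervalIntegral.abs_integral_le_integral_abs hxy).trans
    (intervalIntegral.integral_mono_interval hx.1 hxy hy.2
      (ae_of_all _ fun _ ↦ abs_nonneg _) hf.abs)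

theorem sq_div_rpow_three_halves_mul_le {p w m d : ℝ} (hp : 0 < p) :
    (m / p ^ ((3 : ℝ) / 2) * d) ^ 2
      ≤ 2 * (p⁻¹ * (p * w + m * p⁻¹ * d) ^ 2) + 2 * (p * w ^ 2) := by
  have hq : (p ^ ((3 : ℝ) / 2)) ^ 2 = p ^ 3 := by
    rw [← Real.rpow_natCast, ← Real.rpow_mul hp.le]
    norm_num
  have hsplit : (m * d) ^ 2 ≤ 2 * (p ^ 2 * w + m * d) ^ 2 + 2 * (p ^ 2 * w) ^ 2 := by
    nlinarith [sq_nonneg (2 * (p ^ 2 * w) + m * d)]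
  calc (m / p ^ ((3 : ℝ) / 2) * d) ^ 2 = (m * d) ^ 2 / p ^ 3 := by
        rw [div_mul_eq_mul_div, div_pow, hq]
    _ ≤ (2 * (p ^ 2 * w + m * d) ^ 2 + 2 * (p ^ 2 * w) ^ 2) / p ^ 3 := by gcongr
    _ = 2 * (p⁻¹ * (p * w + m * p⁻¹ * d) ^ 2) + 2 * (p * w ^ 2) := by
        field_simp

section Potential

variable {P μ : ℝ → ℝ} {ρs x : ℝ}

theorem Qf_eq_mul_integral (hPc : ContinuousOn P (Ioi 0)) (hρs : 0 < ρs) (hx : 0 < x) :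
    Qf P ρs x = x * ∫ τ in ρs..x, (P τ - P ρs) / τ ^ 2 := by
  have hsub : uIcc ρs x ⊆ Ioi 0 := ordConnected_Ioi.uIcc_subset hρs hx
  have hsq : ∀ τ ∈ uIcc ρs x, τ ^ 2 ≠ 0 := fun τ hτ ↦ pow_ne_zero 2 (hsub hτ).ne'
  have hconst : IntervalIntegrable (fun τ ↦ P ρs / τ ^ 2) volume ρs x :=
    (continuousOn_const.div (continuousOn_pow 2) hsq).intervalIntegrable
  have hPint : IntervalIntegrable (fun τ ↦ P τ / τ ^ 2) volume ρs x :=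
    ((hPc.mono hsub).div (continuousOn_pow 2) hsq).intervalIntegrable
  have hinv : ∫ τ in ρs..x, P ρs / τ ^ 2 = P ρs * (ρs⁻¹ - x⁻¹) := by
    rw [intervalIntegral.integral_eq_sub_of_hasDerivAt (f := fun τ ↦ -(P ρs * τ⁻¹))
      (fun τ hτ ↦ by
        convert ((hasDerivAt_inv (hsub hτ).ne').const_mul (P ρs)).neg using 1
        · rfl
        · ring) hconst]
    ring
  simp_rw [sub_div]
  rw [intervalIntegral.integral_sub hPint hconst, hinv, Qf]
  field_simp
  ring

theorem Qf_nonneg (hPc : ContinuousOn P (Ioi 0)) (hPmono : MonotoneOn P (Ioi 0))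
    (hρs : 0 < ρs) (hx : 0 < x) : 0 ≤ Qf P ρs x := by
  rw [Qf_eq_mul_integral hPc hρs hx]
  refine mul_nonneg hx.le ?_
  rcases le_total ρs x with h | h
  · exact intervalIntegral.integral_nonneg h fun τ hτ ↦
      div_nonneg (sub_nonneg.2 (hPmono hρs (hρs.trans_le hτ.1) hτ.1)) (sq_nonneg τ)
  · rw [intervalIntegral.integral_symm, ← intervalIntegral.integral_neg]
    exact intervalIntegral.integral_nonneg h fun τ hτ ↦ by
      rw [← neg_div, neg_sub]
      exact div_nonneg (sub_nonneg.2 (hPmono (hx.trans_le hτ.1) hρs hτ.2)) (sq_nonneg τ)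

theorem continuousOn_Qf (hPc : ContinuousOn P (Ioi 0)) (hρs : 0 < ρs) :
    ContinuousOn (Qf P ρs) (Ioi 0) := by
  have hint : ContinuousOn (fun τ ↦ P τ / τ ^ 2) (Ioi 0) :=
    hPc.div (continuousOn_pow 2) fun τ hτ ↦ pow_ne_zero 2 (ne_of_gt hτ)
  have hprim : ContinuousOn (fun x ↦ ∫ τ in ρs..x, P τ / τ ^ 2) (Ioi 0) := fun x hx ↦
    (hint.hasDerivAt_integral_of_isOpen isOpen_Ioi ordConnected_Ioi hρs hx).continuousAt
      |>.continuousWithinAt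
  exact ((continuousOn_id.mul hprim).sub (continuousOn_const.mul continuousOn_id)).add
    continuousOn_const

theorem continuousOn_div_rpow_three_halves (hμc : ContinuousOn μ (Ioi 0)) :
    ContinuousOn (fun l ↦ μ l / l ^ ((3 : ℝ) / 2)) (Ioi 0) :=
  hμc.div (continuousOn_id.rpow_const fun _ _ ↦ Or.inr (by norm_num))
    fun l hl ↦ (Real.rpow_pos_of_pos hl _).ne'

theorem continuousOn_Gf_integrand (hPc : ContinuousOn P (Ioi 0)) (hμc : ContinuousOn μ (Ioi 0))
    (hρs : 0 < ρs) :
    ContinuousOn (fun l ↦ μ l / l ^ ((3 : ℝ) / 2) * √(Qf P ρs l)) (Ioi 0) :=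
  (continuousOn_div_rpow_three_halves hμc).mul (continuousOn_Qf hPc hρs).sqrt

end Potential

section Profile

variable {P μ : ℝ → ℝ} {ρs a b : ℝ} {ρ ρx v : ℝ → ℝ}

theorem Gf_comp_sub_Gf_comp_left (hPc : ContinuousOn P (Ioi 0)) (hμc : ContinuousOn μ (Ioi 0))
    (hρs : 0 < ρs) (hρx : IntervalIntegrable ρx volume a b)
    (hρrep : ∀ x ∈ Icc a b, ρ x = ρ a + ∫ s in a..x, ρx s)
    (hρpos : ∀ x ∈ Icc a b, 0 < ρ x) {x : ℝ} (hx : x ∈ Icc a b) :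
    Gf P μ ρs (ρ x) - Gf P μ ρs (ρ a)
      = ∫ s in a..x, μ (ρ s) / ρ s ^ ((3 : ℝ) / 2) * ρx s * √(Qf P ρs (ρ s)) := by
  have hg := continuousOn_Gf_integrand hPc hμc hρs
  have hax : uIcc a x ⊆ Icc a b := by
    rw [uIcc_of_le hx.1]
    exact Icc_subset_Icc_right hx.2
  have hmaps : MapsTo (fun s ↦ ρ a + ∫ t in a..s, ρx t) (uIcc a x) (Ioi 0) := fun s hs ↦ by
    simpa only [mem_Ioi, ← hρrep s (hax hs)] using hρpos s (hax hs)
  have hchange := integral_comp_primitive_mul isOpen_Ioi ordConnected_Ioi hg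
    (hρx.mono_set (by rwa [uIcc_of_le (hx.1.trans hx.2)])) hmaps
  rw [← hρrep x hx] at hchange
  have hint : ∀ y ∈ Icc a b, IntervalIntegrable
      (fun l ↦ μ l / l ^ ((3 : ℝ) / 2) * √(Qf P ρs l)) volume ρs (ρ y) := fun y hy ↦
    (hg.mono (ordConnected_Ioi.uIcc_subset hρs (hρpos y hy))).intervalIntegrable
  rw [Gf, Gf, intervalIntegral.integral_interval_sub_left (hint x hx)
    (hint a ⟨le_rfl, hx.1.trans hx.2⟩), ← hchange]
  refine intervalIntegral.integral_congr fun s hs ↦ ?_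
  simp only [← hρrep s (hax hs)]
  ring

theorem intervalIntegrable_sq_div_rpow_three_halves_mul (hμc : ContinuousOn μ (Ioi 0))
    (hab : a ≤ b) (hρcont : ContinuousOn ρ (Icc a b)) (hρpos : ∀ x ∈ Icc a b, 0 < ρ x)
    (hρx2 : IntervalIntegrable (fun s ↦ ρx s ^ 2) volume a b) :
    IntervalIntegrable (fun s ↦ (μ (ρ s) / ρ s ^ ((3 : ℝ) / 2) * ρx s) ^ 2) volume a b := by
  rw [← uIcc_of_le hab] at hρcont hρpos
  convert hρx2.continuousOn_mul (((continuousOn_div_rpow_three_halves hμc).comp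
    hρcont hρpos).pow 2) using 2 with s
  simp only [Pi.pow_apply, Function.comp_apply]
  ring

theorem sq_Gf_comp_sub_le (hPc : ContinuousOn P (Ioi 0)) (hPmono : MonotoneOn P (Ioi 0))
    (hμc : ContinuousOn μ (Ioi 0)) (hρs : 0 < ρs) (hab : a ≤ b)
    (hρcont : ContinuousOn ρ (Icc a b)) (hρpos : ∀ x ∈ Icc a b, 0 < ρ x)
    (hρx : IntervalIntegrable ρx volume a b)
    (hρx2 : IntervalIntegrable (fun s ↦ ρx s ^ 2) volume a b)
    (hρrep : ∀ x ∈ Icc a b, ρ x = ρ a + ∫ s in a..x, ρx s)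
    {x y : ℝ} (hx : x ∈ Icc a b) (hy : y ∈ Icc a b) :
    (Gf P μ ρs (ρ x) - Gf P μ ρs (ρ y)) ^ 2
      ≤ (∫ s in a..b, (μ (ρ s) / ρ s ^ ((3 : ℝ) / 2) * ρx s) ^ 2) * Uf P ρs a b ρ := by
  set φ : ℝ → ℝ := fun s ↦ μ (ρ s) / ρ s ^ ((3 : ℝ) / 2) * ρx s
  set ψ : ℝ → ℝ := fun s ↦ √(Qf P ρs (ρ s))
  have hρcont' : ContinuousOn ρ (uIcc a b) := by rwa [uIcc_of_le hab]
  have hmaps : MapsTo ρ (uIcc a b) (Ioi 0) := fun s hs ↦ hρpos s (by rwa [← uIcc_of_le hab])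
  have hφψ : IntervalIntegrable (fun s ↦ φ s * ψ s) volume a b := by
    convert hρx.continuousOn_mul ((continuousOn_Gf_integrand hPc hμc hρs).comp hρcont' hmaps)
      using 2 with s
    simp only [φ, ψ, Function.comp_apply]
    ring
  have hφ2 : IntervalIntegrable (fun s ↦ φ s ^ 2) volume a b :=
    intervalIntegrable_sq_div_rpow_three_halves_mul hμc hab hρcont hρpos hρx2
  have hψ2 : IntervalIntegrable (fun s ↦ ψ s ^ 2) volume a b :=
    (((continuousOn_Qf hPc hρs).comp hρcont' hmaps).sqrt.pow 2).intervalIntegrable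
  have hψU : ∫ s in a..b, ψ s ^ 2 = Uf P ρs a b ρ :=
    intervalIntegral.integral_congr fun s hs ↦ Real.sq_sqrt (Qf_nonneg hPc hPmono hρs (hmaps hs))
  have hsub : ∀ z ∈ Icc a b, uIcc a z ⊆ uIcc a b := fun z hz ↦
    uIcc_subset_uIcc left_mem_uIcc (Icc_subset_uIcc hz)
  have hdiff : Gf P μ ρs (ρ x) - Gf P μ ρs (ρ y) = ∫ s in y..x, φ s * ψ s := by
    rw [← sub_sub_sub_cancel_right _ _ (Gf P μ ρs (ρ a)),
      Gf_comp_sub_Gf_comp_left hPc hμc hρs hρx hρrep hρpos hx,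
      Gf_comp_sub_Gf_comp_left hPc hμc hρs hρx hρrep hρpos hy,
      intervalIntegral.integral_interval_sub_left (hφψ.mono_set (hsub x hx))
        (hφψ.mono_set (hsub y hy))]
  calc (Gf P μ ρs (ρ x) - Gf P μ ρs (ρ y)) ^ 2 = |∫ s in y..x, φ s * ψ s| ^ 2 := by
        rw [sq_abs, hdiff]
    _ ≤ (∫ s in a..b, |φ s * ψ s|) ^ 2 := by
        gcongr
        exact abs_intervalIntegral_le_integral_abs_of_mem_Icc hφψ hy hx
    _ = (∫ s in a..b, |φ s| * |ψ s|) ^ 2 := by simp_rw [abs_mul]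
    _ ≤ (∫ s in a..b, |φ s| ^ 2) * ∫ s in a..b, |ψ s| ^ 2 :=
        sq_intervalIntegral_mul_le hab (by simpa only [abs_mul] using hφψ.abs)
          (by simpa only [sq_abs] using hφ2) (by simpa only [sq_abs] using hψ2)
    _ = (∫ s in a..b, φ s ^ 2) * Uf P ρs a b ρ := by simp_rw [sq_abs, hψU]

theorem intervalIntegrable_Wf_integrand (hμc : ContinuousOn μ (Ioi 0)) (hab : a ≤ b)
    (hρcont : ContinuousOn ρ (Icc a b)) (hρpos : ∀ x ∈ Icc a b, 0 < ρ x)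
    (hvcont : ContinuousOn v (Icc a b)) (hρx : IntervalIntegrable ρx volume a b)
    (hρx2 : IntervalIntegrable (fun s ↦ ρx s ^ 2) volume a b) :
    IntervalIntegrable (fun s ↦ (ρ s)⁻¹ * (ρ s * v s + μ (ρ s) * (ρ s)⁻¹ * ρx s) ^ 2)
      volume a b := by
  have hmaps : MapsTo ρ (uIcc a b) (Ioi 0) := fun s hs ↦ hρpos s (by rwa [← uIcc_of_le hab])
  rw [← uIcc_of_le hab] at hρcont hvcont
  have hμρ : ContinuousOn (fun s ↦ μ (ρ s)) (uIcc a b) := hμc.comp hρcont hmaps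
  have hρinv : ContinuousOn (fun s ↦ (ρ s)⁻¹) (uIcc a b) :=
    hρcont.inv₀ fun s hs ↦ (hmaps hs).ne'
  have hexpanded := ((hρcont.mul (hvcont.pow 2)).intervalIntegrable.add
    (hρx.continuousOn_mul (((continuousOn_const (c := (2 : ℝ)).mul hvcont).mul hμρ).mul
      hρinv))).add (hρx2.continuousOn_mul ((hμρ.pow 2).mul (hρinv.pow 3)))
  refine (intervalIntegrable_congr fun s hs ↦ ?_).1 hexpanded
  have : ρ s ≠ 0 := (mem_Ioi.1 (hmaps (uIoc_subset_uIcc hs))).ne'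
  simp only [Pi.mul_apply, Pi.pow_apply]
  field_simp
  ring

theorem integral_sq_div_rpow_three_halves_mul_le (hμc : ContinuousOn μ (Ioi 0)) (hab : a ≤ b)
    (hρcont : ContinuousOn ρ (Icc a b)) (hρpos : ∀ x ∈ Icc a b, 0 < ρ x)
    (hvcont : ContinuousOn v (Icc a b)) (hρx : IntervalIntegrable ρx volume a b)
    (hρx2 : IntervalIntegrable (fun s ↦ ρx s ^ 2) volume a b) :
    ∫ s in a..b, (μ (ρ s) / ρ s ^ ((3 : ℝ) / 2) * ρx s) ^ 2
      ≤ 2 * (∫ s in a..b, (ρ s)⁻¹ * (ρ s * v s + μ (ρ s) * (ρ s)⁻¹ * ρx s) ^ 2)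
        + 2 * ∫ s in a..b, ρ s * v s ^ 2 := by
  have hA := intervalIntegrable_Wf_integrand hμc hab hρcont hρpos hvcont hρx hρx2
  have hB : IntervalIntegrable (fun s ↦ ρ s * v s ^ 2) volume a b :=
    (hρcont.mul (hvcont.pow 2)).intervalIntegrable_of_Icc hab
  rw [← intervalIntegral.integral_const_mul, ← intervalIntegral.integral_const_mul,
    ← intervalIntegral.integral_add (hA.const_mul 2) (hB.const_mul 2)]
  exact intervalIntegral.integral_mono_on hab
    (intervalIntegrable_sq_div_rpow_three_halves_mul hμc hab hρcont hρpos hρx2)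
    ((hA.const_mul 2).add (hB.const_mul 2))
    fun s hs ↦ sq_div_rpow_three_halves_mul_le (hρpos s hs)

variable {r S : ℝ}

theorem energy_bounds_of_Vf_le (hr : 0 < r) (hab : a ≤ b) (hρpos : ∀ x ∈ Icc a b, 0 < ρ x)
    (hU : 0 ≤ Uf P ρs a b ρ) (hV : Vf P μ ρs r a b ρ ρx v ≤ S) :
    2 * (∫ s in a..b, (ρ s)⁻¹ * (ρ s * v s + μ (ρ s) * (ρ s)⁻¹ * ρx s) ^ 2)
        + 2 * (∫ s in a..b, ρ s * v s ^ 2) ≤ 4 * (1 + r⁻¹) * S ∧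
      (1 + r) * Uf P ρs a b ρ ≤ S ∧
      kf μ ρs (ρ a) ^ 2 ≤ 4 * (1 + r⁻¹) * S := by
  set IA := ∫ s in a..b, (ρ s)⁻¹ * (ρ s * v s + μ (ρ s) * (ρ s)⁻¹ * ρx s) ^ 2
  set IB := ∫ s in a..b, ρ s * v s ^ 2
  set k := kf μ ρs (ρ a)
  have hA : 0 ≤ IA := intervalIntegral.integral_nonneg hab fun s hs ↦
    mul_nonneg (inv_nonneg.2 (hρpos s hs).le) (sq_nonneg _)
  have hB : 0 ≤ IB :=
    intervalIntegral.integral_nonneg hab fun s hs ↦ mul_nonneg (hρpos s hs).le (sq_nonneg _)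
  unfold Vf Wf Ef at hV
  obtain ⟨hIA, hIB, hUS, hva, hka⟩ : IA ≤ 2 * S ∧ r * IB ≤ 2 * S ∧
      (1 + r) * Uf P ρs a b ρ ≤ S ∧ r * v a ^ 2 ≤ 2 * S ∧ (v a + k) ^ 2 ≤ 2 * S := by
    refine ⟨?_, ?_, ?_, ?_, ?_⟩ <;>
    nlinarith [sq_nonneg (v b - kf μ ρs (ρ b)), sq_nonneg (v a + k),
      mul_nonneg hr.le (sq_nonneg (v a)), mul_nonneg hr.le (sq_nonneg (v b)),
      mul_nonneg hr.le hB, mul_nonneg hr.le hU]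
  have hIB' : 2 * IB ≤ 4 * S / r := by rw [le_div_iff₀ hr]; linarith
  have hva' : 2 * v a ^ 2 ≤ 4 * S / r := by rw [le_div_iff₀ hr]; linarith
  have hsplit : 4 * (1 + r⁻¹) * S = 4 * S + 4 * S / r := by ring
  refine ⟨by linarith, hUS, ?_⟩
  nlinarith [sq_nonneg (2 * v a + k)]

end Profile

theorem G_oscillation_and_boundary_k_bounds_general
    (P μ : ℝ → ℝ) (ρs : ℝ)
    (hP : ContDiffOn ℝ 2 P (Ioi 0)) (hμ : ContDiffOn ℝ 2 μ (Ioi 0))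
    (hPmono : StrictMonoOn P (Ioi 0))
    (hρs : 0 < ρs)
    (r S : ℝ) (hr : 0 < r) (hS : 0 ≤ S)
    (a b : ℝ) (ρ ρx v : ℝ → ℝ) (hab : a < b)
    (hρcont : ContinuousOn ρ (Icc a b)) (hρpos : ∀ x ∈ Icc a b, 0 < ρ x)
    (hρH1 : H1On a b ρ ρx)
    (hvcont : ContinuousOn v (Icc a b))
    (hV : Vf P μ ρs r a b ρ ρx v ≤ S) :
    (∀ x ∈ Icc a b, ∀ y ∈ Icc a b,
        |Gf P μ ρs (ρ x) - Gf P μ ρs (ρ y)| ≤ 2 / Real.sqrt r * S) ∧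
    (kf μ ρs (ρ a)) ^ 2 ≤ 4 * (1 + r⁻¹) * S := by
  obtain ⟨hρx, hρx2, hρrep⟩ := hρH1
  have hPc := hP.continuousOn
  have hμc := hμ.continuousOn
  have hU : 0 ≤ Uf P ρs a b ρ := intervalIntegral.integral_nonneg hab.le fun x hx ↦
    Qf_nonneg hPc hPmono.monotoneOn hρs (hρpos x hx)
  obtain ⟨hAB, hUS, hk⟩ := energy_bounds_of_Vf_le hr hab.le hρpos hU hV
  refine ⟨fun x hx y hy ↦ abs_le_of_sq_le_sq ?_ (by positivity), hk⟩
  calc _ ≤ _ := sq_Gf_comp_sub_le hPc hPmono.monotoneOn hμc hρs hab.le hρcont hρpos hρx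
        hρx2 hρrep hx hy
    _ ≤ (4 * (1 + r⁻¹) * S) * (S / (1 + r)) :=
        mul_le_mul ((integral_sq_div_rpow_three_halves_mul_le hμc hab.le hρcont hρpos hvcont
          hρx hρx2).trans hAB) ((le_div_iff₀' (by positivity)).2 hUS) hU (by positivity)
    _ = (2 / √r * S) ^ 2 := by
        rw [mul_pow, div_pow, Real.sq_sqrt hr.le]
        field_simp
        ring

/-- **Estimates (4.4) and (4.5) from the proof of Lemma 1.**  If `V(a,b,ρ,v) ≤ S`
then `|G(ρ(x)) − G(ρ(y))| ≤ (2/√r) S` for all `x, y ∈ [a,b]`, and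
`k²(ρ(a)) ≤ 4(1 + r⁻¹) S`. -/
theorem G_oscillation_and_boundary_k_bounds
    (P μ : ℝ → ℝ) (Pext ρs : ℝ)
    (hP : ContDiffOn ℝ 2 P (Ioi 0)) (hμ : ContDiffOn ℝ 2 μ (Ioi 0))
    (hPpos : ∀ x, 0 < x → 0 < P x) (hμpos : ∀ x, 0 < x → 0 < μ x)
    (hPmono : StrictMonoOn P (Ioi 0))
    (hPrange : P '' Ioi 0 = Ioi 0)
    (hPext : 0 < Pext) (hρs : 0 < ρs) (hPρs : P ρs = Pext)
    (r S : ℝ) (hr : 0 < r) (hS : 0 ≤ S)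
    (a b : ℝ) (ρ ρx v : ℝ → ℝ) (hab : a < b)
    (hρcont : ContinuousOn ρ (Icc a b)) (hρpos : ∀ x ∈ Icc a b, 0 < ρ x)
    (hρH1 : H1On a b ρ ρx)
    (hvcont : ContinuousOn v (Icc a b))
    (hmass : (∫ x in a..b, ρ x) = 1)
    (hV : Vf P μ ρs r a b ρ ρx v ≤ S) :
    (∀ x ∈ Icc a b, ∀ y ∈ Icc a b,
        |Gf P μ ρs (ρ x) - Gf P μ ρs (ρ y)| ≤ 2 / Real.sqrt r * S) ∧
    (kf μ ρs (ρ a)) ^ 2 ≤ 4 * (1 + r⁻¹) * S :=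
  G_oscillation_and_boundary_k_bounds_general P μ ρs hP hμ hPmono hρs r S hr hS a b ρ ρx v hab
    hρcont hρpos hρH1 hvcont hV
end

section
/- Let K, R, r > 0 be constants and let k_a, k_b, p_a, p_b, v_a be real numbers satisfying k_a·p_a ≥ k_a²/K and k_b·p_b ≥ k_b²/K. Then R((r+1)v_a + k_a)² + k_b·p_b + k_a·p_a ≥ (3/(4K))k_a² + (1/K)k_b² + (R(r+1)²/(1+4KR))v_a². -/
/-- **The key algebraic estimate (4.28) from the proof of Lemma 3.**  For constants
`K, R, r > 0` and reals `k_a, k_b, p_a, p_b, v_a` with `k_a p_a ≥ k_a²/K` and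
`k_b p_b ≥ k_b²/K`:
`R((r+1)v_a + k_a)² + k_b p_b + k_a p_a
  ≥ (3/(4K))k_a² + (1/K)k_b² + (R(r+1)²/(1+4KR))v_a²`. -/
theorem key_algebraic_estimate
    (K R r : ℝ) (hK : 0 < K) (hR : 0 < R) (hr : 0 < r)
    (ka kb pa pb va : ℝ)
    (hka : ka ^ 2 / K ≤ ka * pa) (hkb : kb ^ 2 / K ≤ kb * pb) :
    3 / (4 * K) * ka ^ 2 + 1 / K * kb ^ 2 + R * (r + 1) ^ 2 / (1 + 4 * K * R) * va ^ 2
      ≤ R * ((r + 1) * va + ka) ^ 2 + kb * pb + ka * pa := by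
  have hD : (0:ℝ) < 1 + 4 * K * R := by positivity
  have key : R * (r + 1) ^ 2 / (1 + 4 * K * R) * va ^ 2
      ≤ R * ((r + 1) * va + ka) ^ 2 + ka ^ 2 / (4 * K) := by
    rw [div_mul_eq_mul_div, div_le_iff₀ hD]
    have e : ka ^ 2 / (4 * K) * (4 * K) = ka ^ 2 :=
      div_mul_cancel₀ _ (by positivity)
    nlinarith [sq_nonneg (ka + 4 * K * R * ((r + 1) * va + ka)), e, hK, hR.le,
      mul_pos hK hR]
  have h1 : ka ^ 2 / K ≤ ka * pa := hka
  have h2 : kb ^ 2 / K ≤ kb * pb := hkb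
  have e1 : 3 / (4 * K) * ka ^ 2 + ka ^ 2 / (4 * K) = ka ^ 2 / K := by
    field_simp; ring
  have e2 : 1 / K * kb ^ 2 = kb ^ 2 / K := by ring
  linarith
end
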